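/- arXiv:1702.06485 — 8 statements merged into one kernel-verified Lean document; each statement's English description precedes it below -/
import Mathlib

section
/- Let 1 ≤ p < ∞. For every sequence (λ_i)_{i∈I} of complex numbers one has the inequality (with values in [0,∞]) ∫_X (Σ_{i∈I} |λ_i| χ_{U_i}(y))^p w(y)^p dμ(y) ≤ N^p Σ_{i∈I} |λ_i|^p μ(U_i) w̃(i)^p, where w̃(i) = sup_{x∈U_i} w(x). (First half of Theorem 5.2(c): the embedding ℓ^p_{b_p} ⊆ (L^p_w)^♭ with b_p(i) = μ(U_i)^{1/p} w̃(i).) -/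
open MeasureTheory
open scoped ENNReal NNReal

/-- **Theorem 5.2(c), first half.** For `1 ≤ p < ∞`, the embedding
`ℓ^p_{b_p} ⊆ (L^p_w)^♭`:
`∫_X (Σ_i |λ_i| χ_{U_i}(y))^p w(y)^p dμ(y) ≤ N^p Σ_i |λ_i|^p μ(U_i) w̃(i)^p`,
where `w̃(i) = sup_{x ∈ U_i} w(x)`. -/
theorem stmt_0
    {X : Type*} [MeasurableSpace X] (μ : Measure X)
    {I : Type*} [Countable I] (U : I → Set X)
    (hUmeas : ∀ i, MeasurableSet (U i))
    (hUpos : ∀ i, 0 < μ (U i)) (hUfin : ∀ i, μ (U i) < ∞)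
    (hcov : ∀ x : X, ∃ i, x ∈ U i)
    (N : ℕ) (hN : ∀ x : X, {i : I | x ∈ U i}.encard ≤ N)
    (w : X → ℝ) (hw : ∀ x, 0 < w x) (hwm : Measurable w)
    (p : ℝ) (hp : 1 ≤ p)
    (lam : I → ℂ) :
    ∫⁻ y, (∑' i, (‖lam i‖₊ : ℝ≥0∞) * (U i).indicator (fun _ => (1 : ℝ≥0∞)) y) ^ p
        * ENNReal.ofReal (w y) ^ p ∂μ
      ≤ (N : ℝ≥0∞) ^ p *
        ∑' i, (‖lam i‖₊ : ℝ≥0∞) ^ p * μ (U i) * (⨆ x ∈ U i, ENNReal.ofReal (w x)) ^ p := by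
  have hp0 : (0:ℝ) < p := lt_of_lt_of_le one_pos hp
  set c : I → ℝ≥0∞ := fun i => (‖lam i‖₊ : ℝ≥0∞) with hc
  set g : I → X → ℝ≥0∞ := fun i y => c i * (U i).indicator (fun _ => (1 : ℝ≥0∞)) y with hg
  have hgp : ∀ i y, (g i y) ^ p = c i ^ p * (U i).indicator (fun _ => (1 : ℝ≥0∞)) y := by
    intro i y
    by_cases h : y ∈ U i
    · simp [hg, Set.indicator_of_mem h, ENNReal.mul_rpow_of_nonneg _ _ hp0.le,
        ENNReal.one_rpow]
    · simp [hg, Set.indicator_of_notMem h, ENNReal.zero_rpow_of_pos hp0]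
  -- pointwise estimate
  have key : ∀ y, (∑' i, g i y) ^ p ≤ (N : ℝ≥0∞) ^ p * ∑' i, (g i y) ^ p := by
    intro y
    have hfin : {i : I | y ∈ U i}.Finite := by
      rw [← Set.encard_lt_top_iff]
      exact lt_of_le_of_lt (hN y) (by simp)
    set s := hfin.toFinset with hs
    have hcard : (s.card : ℝ≥0∞) ≤ N := by
      have := hN y
      rw [hfin.encard_eq_coe_toFinset_card] at this
      exact_mod_cast (by exact_mod_cast this : s.card ≤ N)
    have hsum : ∑' i, g i y = ∑ i ∈ s, g i y := by
      refine tsum_eq_sum ?_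
      intro i hi
      have : y ∉ U i := by simpa [hs] using hi
      simp [hg, Set.indicator_of_notMem this]
    rw [hsum]
    rcases s.eq_empty_or_nonempty with he | hne
    · simp [he, ENNReal.zero_rpow_of_pos hp0]
    · obtain ⟨j, hj, hjsup⟩ := Finset.exists_mem_eq_sup s hne (fun i => g i y)
      have h1 : ∑ i ∈ s, g i y ≤ (s.card : ℝ≥0∞) * g j y := by
        rw [← hjsup, ← nsmul_eq_mul]
        exact Finset.sum_le_card_nsmul s _ _ (fun i hi => Finset.le_sup (f := fun i => g i y) hi)
      calc (∑ i ∈ s, g i y) ^ p ≤ ((N : ℝ≥0∞) * g j y) ^ p := by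
            exact ENNReal.rpow_le_rpow (h1.trans (mul_le_mul_left hcard _)) hp0.le
        _ = (N : ℝ≥0∞) ^ p * (g j y) ^ p :=
            ENNReal.mul_rpow_of_nonneg _ _ hp0.le
        _ ≤ (N : ℝ≥0∞) ^ p * ∑' i, (g i y) ^ p :=
            mul_le_mul_right (ENNReal.le_tsum j) _
  have hNfin : (N : ℝ≥0∞) ^ p ≠ ∞ := ENNReal.rpow_ne_top_of_nonneg hp0.le (by simp)
  calc ∫⁻ y, (∑' i, g i y) ^ p * ENNReal.ofReal (w y) ^ p ∂μ
      ≤ ∫⁻ y, (N : ℝ≥0∞) ^ p * ∑' i, (c i ^ p * (U i).indicator (fun _ => (1 : ℝ≥0∞)) y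
          * ENNReal.ofReal (w y) ^ p) ∂μ := by
        refine lintegral_mono fun y => ?_
        rw [ENNReal.tsum_mul_right, ← mul_assoc]
        refine mul_le_mul_left ?_ _
        simpa [hgp] using key y
    _ = (N : ℝ≥0∞) ^ p * ∑' i, ∫⁻ y, c i ^ p * (U i).indicator (fun _ => (1 : ℝ≥0∞)) y
          * ENNReal.ofReal (w y) ^ p ∂μ := by
        rw [lintegral_const_mul' _ _ hNfin, lintegral_tsum]
        intro i
        apply Measurable.aemeasurable
        apply Measurable.mul
        · exact (measurable_const.indicator (hUmeas i)).const_mul _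
        · exact (hwm.ennreal_ofReal).pow_const p |>.mono le_rfl le_rfl
    _ ≤ (N : ℝ≥0∞) ^ p * ∑' i, c i ^ p * μ (U i) * (⨆ x ∈ U i, ENNReal.ofReal (w x)) ^ p := by
        refine mul_le_mul_right (ENNReal.tsum_le_tsum fun i => ?_) _
        have : ∫⁻ y, c i ^ p * (U i).indicator (fun _ => (1 : ℝ≥0∞)) y
            * ENNReal.ofReal (w y) ^ p ∂μ
            = c i ^ p * ∫⁻ y in U i, ENNReal.ofReal (w y) ^ p ∂μ := by
          simp only [mul_assoc]
          rw [lintegral_const_mul' _ _ (by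
            exact ENNReal.rpow_ne_top_of_nonneg hp0.le ENNReal.coe_ne_top)]
          congr 1
          rw [← lintegral_indicator (hUmeas i)]
          refine lintegral_congr fun y => ?_
          by_cases h : y ∈ U i <;> simp [h]
        rw [this, mul_assoc]
        refine mul_le_mul_right ?_ _
        have hb : ∫⁻ y in U i, ENNReal.ofReal (w y) ^ p ∂μ
            ≤ (⨆ x ∈ U i, ENNReal.ofReal (w x)) ^ p * μ (U i) := by
          calc ∫⁻ y in U i, ENNReal.ofReal (w y) ^ p ∂μ
              ≤ ∫⁻ _ in U i, (⨆ x ∈ U i, ENNReal.ofReal (w x)) ^ p ∂μ := by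
                refine setLIntegral_mono measurable_const fun y hy => ?_
                exact ENNReal.rpow_le_rpow (le_iSup₂ (f := fun x (_ : x ∈ U i) =>
                  ENNReal.ofReal (w x)) y hy) hp0.le
            _ = (⨆ x ∈ U i, ENNReal.ofReal (w x)) ^ p * μ (U i) := by
                simp [Measure.restrict_apply_univ]
        calc _ ≤ (⨆ x ∈ U i, ENNReal.ofReal (w x)) ^ p * μ (U i) := hb
          _ = μ (U i) * (⨆ x ∈ U i, ENNReal.ofReal (w x)) ^ p := mul_comm _ _
end

section
/- Let 1 ≤ p < ∞ and suppose sup_{x,y∈U_i} m_w(x,y) ≤ C_m for all i ∈ I, where m_w(x,y) = max(w(x)/w(y), w(y)/w(x)). Then for every sequence (λ_i)_{i∈I} of complex numbers one has (with values in [0,∞]) Σ_{i∈I} |λ_i|^p μ(U_i) w̃(i)^p ≤ C_m^p ∫_X (Σ_{i∈I} |λ_i| χ_{U_i}(y))^p w(y)^p dμ(y), where w̃(i) = sup_{x∈U_i} w(x). (Second half of Theorem 5.2(c).) -/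
open MeasureTheory
open scoped ENNReal NNReal

private lemma tsum_rpow_le_aux {I : Type*} [Countable I] (a : I → ℝ≥0∞) {p : ℝ} (hp : 1 ≤ p) :
    ∑' i, a i ^ p ≤ (∑' i, a i) ^ p := by
  set S := ∑' i, a i with hS
  have hp0 : (0:ℝ) < p := by linarith
  rcases eq_or_ne S 0 with h0 | h0
  · have hz : ∀ i, a i = 0 := ENNReal.tsum_eq_zero.mp (show ∑' i, a i = 0 from h0)
    simp [hz, ENNReal.zero_rpow_of_pos hp0]
  rcases eq_or_ne S ∞ with htop | htop
  · rw [htop, ENNReal.top_rpow_of_pos hp0]; exact le_top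
  have key : ∀ i, a i ^ p ≤ a i * S ^ (p - 1) := by
    intro i
    rcases eq_or_ne (a i) 0 with h | h
    · simp [h, ENNReal.zero_rpow_of_pos hp0]
    have hle : a i ≤ S := ENNReal.le_tsum i
    have hfin : a i ≠ ∞ := fun hi => htop (top_le_iff.mp (hi ▸ hle))
    calc a i ^ p = a i ^ ((1:ℝ) + (p-1)) := by norm_num
      _ = a i ^ (1:ℝ) * a i ^ (p-1) := ENNReal.rpow_add _ _ h hfin
      _ = a i * a i ^ (p-1) := by rw [ENNReal.rpow_one]
      _ ≤ a i * S ^ (p-1) :=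
          mul_le_mul_right (ENNReal.rpow_le_rpow hle (by linarith)) _
  calc ∑' i, a i ^ p ≤ ∑' i, a i * S ^ (p-1) := ENNReal.tsum_le_tsum key
    _ = S * S ^ (p-1) := by rw [ENNReal.tsum_mul_right]
    _ = S ^ (1:ℝ) * S ^ (p-1) := by rw [ENNReal.rpow_one]
    _ = S ^ p := by rw [← ENNReal.rpow_add _ _ h0 htop]; norm_num

/-- **Theorem 5.2(c), second half.** If `sup_{x,y ∈ U_i} m_w(x,y) ≤ C_m` for all `i`,
where `m_w(x,y) = max(w(x)/w(y), w(y)/w(x))`, then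
`Σ_i |λ_i|^p μ(U_i) w̃(i)^p ≤ C_m^p ∫_X (Σ_i |λ_i| χ_{U_i}(y))^p w(y)^p dμ(y)`. -/
theorem stmt_1
    {X : Type*} [MeasurableSpace X] (μ : Measure X)
    {I : Type*} [Countable I] (U : I → Set X)
    (hUmeas : ∀ i, MeasurableSet (U i))
    (hUpos : ∀ i, 0 < μ (U i)) (hUfin : ∀ i, μ (U i) < ∞)
    (hcov : ∀ x : X, ∃ i, x ∈ U i)
    (N : ℕ) (hN : ∀ x : X, {i : I | x ∈ U i}.encard ≤ N)
    (w : X → ℝ) (hw : ∀ x, 0 < w x) (hwm : Measurable w)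
    (p : ℝ) (hp : 1 ≤ p)
    (Cm : ℝ) (hCm : ∀ i, ∀ x ∈ U i, ∀ y ∈ U i, max (w x / w y) (w y / w x) ≤ Cm)
    (lam : I → ℂ) :
    ∑' i, (‖lam i‖₊ : ℝ≥0∞) ^ p * μ (U i) * (⨆ x ∈ U i, ENNReal.ofReal (w x)) ^ p
      ≤ ENNReal.ofReal Cm ^ p *
        ∫⁻ y, (∑' i, (‖lam i‖₊ : ℝ≥0∞) * (U i).indicator (fun _ => (1 : ℝ≥0∞)) y) ^ p
          * ENNReal.ofReal (w y) ^ p ∂μ := by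
  have hp0 : (0:ℝ) < p := by linarith
  cases isEmpty_or_nonempty I with
  | inl hI => simp
  | inr hI =>
    -- Cm ≥ 0
    obtain ⟨i0⟩ := hI
    obtain ⟨x0, hx0⟩ : (U i0).Nonempty := by
      by_contra h
      rw [Set.not_nonempty_iff_eq_empty] at h
      have := hUpos i0
      rw [h] at this
      simp at this
    have hCm1 : (1:ℝ) ≤ Cm := by
      have := hCm i0 x0 hx0 x0 hx0
      rwa [div_self (hw x0).ne', max_self] at this
    have hCm0 : (0:ℝ) ≤ Cm := by linarith
    -- supremum bound on U i
    have hsup : ∀ i, ∀ y ∈ U i,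
        (⨆ x ∈ U i, ENNReal.ofReal (w x)) ≤ ENNReal.ofReal Cm * ENNReal.ofReal (w y) := by
      intro i y hy
      refine iSup₂_le fun x hx => ?_
      rw [← ENNReal.ofReal_mul hCm0]
      refine ENNReal.ofReal_le_ofReal ?_
      have h1 : w x / w y ≤ Cm := le_trans (le_max_left _ _) (hCm i x hx y hy)
      exact (div_le_iff₀ (hw y)).mp h1
    -- per-index bound
    have hstep : ∀ i, (‖lam i‖₊ : ℝ≥0∞) ^ p * μ (U i) * (⨆ x ∈ U i, ENNReal.ofReal (w x)) ^ p
        ≤ ∫⁻ y, (U i).indicator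
            (fun y => (‖lam i‖₊ : ℝ≥0∞) ^ p * ENNReal.ofReal Cm ^ p
              * ENNReal.ofReal (w y) ^ p) y ∂μ := by
      intro i
      rw [lintegral_indicator (hUmeas i)]
      have hmeas : Measurable (fun y => (‖lam i‖₊ : ℝ≥0∞) ^ p * ENNReal.ofReal Cm ^ p
          * ENNReal.ofReal (w y) ^ p) := by
        exact measurable_const.mul
          (ENNReal.continuous_rpow_const.measurable.comp (ENNReal.measurable_ofReal.comp hwm))
      calc (‖lam i‖₊ : ℝ≥0∞) ^ p * μ (U i) * (⨆ x ∈ U i, ENNReal.ofReal (w x)) ^ p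
          = ∫⁻ _ in U i, (‖lam i‖₊ : ℝ≥0∞) ^ p * (⨆ x ∈ U i, ENNReal.ofReal (w x)) ^ p ∂μ := by
            rw [setLIntegral_const]; ring
        _ ≤ ∫⁻ y in U i, (‖lam i‖₊ : ℝ≥0∞) ^ p * ENNReal.ofReal Cm ^ p
              * ENNReal.ofReal (w y) ^ p ∂μ := by
            refine setLIntegral_mono hmeas fun y hy => ?_
            have h2 : (⨆ x ∈ U i, ENNReal.ofReal (w x)) ^ p
                ≤ ENNReal.ofReal Cm ^ p * ENNReal.ofReal (w y) ^ p := by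
              rw [← ENNReal.mul_rpow_of_nonneg _ _ (le_of_lt hp0)]
              exact ENNReal.rpow_le_rpow (hsup i y hy) (le_of_lt hp0)
            calc (‖lam i‖₊ : ℝ≥0∞) ^ p * (⨆ x ∈ U i, ENNReal.ofReal (w x)) ^ p
                ≤ (‖lam i‖₊ : ℝ≥0∞) ^ p * (ENNReal.ofReal Cm ^ p * ENNReal.ofReal (w y) ^ p) :=
                  mul_le_mul_right h2 _
              _ = (‖lam i‖₊ : ℝ≥0∞) ^ p * ENNReal.ofReal Cm ^ p * ENNReal.ofReal (w y) ^ p := by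
                  ring
    -- sum the per-index bounds and swap sum and integral
    calc ∑' i, (‖lam i‖₊ : ℝ≥0∞) ^ p * μ (U i) * (⨆ x ∈ U i, ENNReal.ofReal (w x)) ^ p
        ≤ ∑' i, ∫⁻ y, (U i).indicator
            (fun y => (‖lam i‖₊ : ℝ≥0∞) ^ p * ENNReal.ofReal Cm ^ p
              * ENNReal.ofReal (w y) ^ p) y ∂μ := ENNReal.tsum_le_tsum hstep
      _ = ∫⁻ y, ∑' i, (U i).indicator
            (fun y => (‖lam i‖₊ : ℝ≥0∞) ^ p * ENNReal.ofReal Cm ^ p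
              * ENNReal.ofReal (w y) ^ p) y ∂μ := by
            refine (lintegral_tsum fun i => Measurable.aemeasurable ?_).symm
            exact (measurable_const.mul
              (ENNReal.continuous_rpow_const.measurable.comp
                (ENNReal.measurable_ofReal.comp hwm))).indicator (hUmeas i)
      _ ≤ ∫⁻ y, ENNReal.ofReal Cm ^ p *
            ((∑' i, (‖lam i‖₊ : ℝ≥0∞) * (U i).indicator (fun _ => (1 : ℝ≥0∞)) y) ^ p
              * ENNReal.ofReal (w y) ^ p) ∂μ := by
            refine lintegral_mono fun y => ?_
            have h3 : ∑' i, (U i).indicator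
                (fun y => (‖lam i‖₊ : ℝ≥0∞) ^ p * ENNReal.ofReal Cm ^ p
                  * ENNReal.ofReal (w y) ^ p) y
                = ENNReal.ofReal Cm ^ p * ENNReal.ofReal (w y) ^ p *
                  ∑' i, ((‖lam i‖₊ : ℝ≥0∞) * (U i).indicator (fun _ => (1 : ℝ≥0∞)) y) ^ p := by
              rw [← ENNReal.tsum_mul_left]
              refine tsum_congr fun i => ?_
              by_cases h : y ∈ U i
              · simp only [Set.indicator_of_mem h, mul_one, ENNReal.one_rpow]
                ring
              · simp [Set.indicator_of_notMem h, ENNReal.zero_rpow_of_pos hp0]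
            rw [h3]
            calc ENNReal.ofReal Cm ^ p * ENNReal.ofReal (w y) ^ p *
                  ∑' i, ((‖lam i‖₊ : ℝ≥0∞) * (U i).indicator (fun _ => (1 : ℝ≥0∞)) y) ^ p
                ≤ ENNReal.ofReal Cm ^ p * ENNReal.ofReal (w y) ^ p *
                  (∑' i, (‖lam i‖₊ : ℝ≥0∞) * (U i).indicator (fun _ => (1 : ℝ≥0∞)) y) ^ p :=
                  mul_le_mul_right (tsum_rpow_le_aux _ hp) _
              _ = ENNReal.ofReal Cm ^ p *
                  ((∑' i, (‖lam i‖₊ : ℝ≥0∞) * (U i).indicator (fun _ => (1 : ℝ≥0∞)) y) ^ p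
                    * ENNReal.ofReal (w y) ^ p) := by ring
      _ = ENNReal.ofReal Cm ^ p *
            ∫⁻ y, (∑' i, (‖lam i‖₊ : ℝ≥0∞) * (U i).indicator (fun _ => (1 : ℝ≥0∞)) y) ^ p
              * ENNReal.ofReal (w y) ^ p ∂μ := by
            refine lintegral_const_mul' _ _ ?_
            exact ENNReal.rpow_ne_top_of_nonneg (le_of_lt hp0) ENNReal.ofReal_ne_top
end

section
/- Let 1 ≤ p < ∞ and suppose sup_{x,y∈U_i} m_w(x,y) ≤ C_m for all i ∈ I, where m_w(x,y) = max(w(x)/w(y), w(y)/w(x)). Then there exist constants 0 < c ≤ C < ∞, depending only on N, C_m and p, such that for every sequence (λ_i)_{i∈I} of complex numbers (with both sides possibly infinite): c (Σ_{i∈I} |λ_i|^p b_p(i)^p)^{1/p} ≤ ( ∫_X (Σ_{i∈I} |λ_i| χ_{U_i}(y))^p w(y)^p dμ(y) )^{1/p} ≤ C (Σ_{i∈I} |λ_i|^p b_p(i)^p)^{1/p}, where b_p(i) = μ(U_i)^{1/p} w̃(i) and w̃(i) = sup_{x∈U_i} w(x). (Theorem 5.2(c), flat sequence space: (L^p_w)^♭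 = ℓ^p_{b_p} with equivalent norms.) -/
open MeasureTheory
open scoped ENNReal NNReal

/-!
Put `a i = |λ i|` and `T = ∑ i, a i ^ p * ∫_{U i} w ^ p`. Pointwise, since `p ≥ 1` and at most `N`
of the indicators `1_{U i}` are nonzero,
`∑ i, a i ^ p * 1_{U i} ≤ (∑ i, a i * 1_{U i}) ^ p ≤ N ^ p * ∑ i, a i ^ p * 1_{U i}`,
so the `p`-th power of the middle term lies between `T` and `N ^ p * T`. On `U i` the weight stays
within the factor `C_m` of its supremum `w̃ i`, so `μ (U i) * w̃ i ^ p` lies between `∫_{U i} w ^ p`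
and `C_m ^ p * ∫_{U i} w ^ p`, and `T` is comparable to `∑ i, |λ i| ^ p * b_p(i) ^ p`. This gives
`c = 1 / max C_m 1` and `C = max N 1`.
-/

namespace ENNReal

variable {ι : Type*} {p : ℝ}

theorem sum_rpow_le_rpow_sum (s : Finset ι) (g : ι → ℝ≥0∞) (hp : 1 ≤ p) :
    ∑ i ∈ s, g i ^ p ≤ (∑ i ∈ s, g i) ^ p := by
  induction s using Finset.cons_induction with
  | empty => simp [zero_rpow_of_pos (zero_lt_one.trans_le hp)]
  | cons a s _ ih =>
    rw [Finset.sum_cons, Finset.sum_cons]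
    exact (add_le_add_right ih _).trans (add_rpow_le_rpow_add _ _ hp)

theorem tsum_rpow_le_rpow_tsum (g : ι → ℝ≥0∞) (hp : 1 ≤ p) :
    ∑' i, g i ^ p ≤ (∑' i, g i) ^ p := by
  rw [ENNReal.tsum_eq_iSup_sum]
  exact iSup_le fun s => (sum_rpow_le_rpow_sum s g hp).trans
    (rpow_le_rpow (ENNReal.sum_le_tsum s) (zero_le_one.trans hp))

theorem rpow_tsum_le_of_encard_support_le {g : ι → ℝ≥0∞} {N : ℕ}
    (hg : (Function.support g).encard ≤ N) (hp : 0 < p) :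
    (∑' i, g i) ^ p ≤ (N : ℝ≥0∞) ^ p * ∑' i, g i ^ p := by
  set s := ∑' i, g i ^ p
  have hg_le : ∀ i, g i ≤ s ^ p⁻¹ := fun i => (le_rpow_inv_iff hp).2 (ENNReal.le_tsum i)
  have hsum : ∑' i, g i ≤ N * s ^ p⁻¹ := calc
    ∑' i, g i = ∑' i : Function.support g, g i :=
      (tsum_subtype_eq_of_support_subset subset_rfl).symm
    _ ≤ ∑' _ : Function.support g, s ^ p⁻¹ := ENNReal.tsum_le_tsum fun i => hg_le i
    _ = (Function.support g).encard * s ^ p⁻¹ := tsum_set_const _ _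
    _ ≤ N * s ^ p⁻¹ := by gcongr; exact_mod_cast hg
  calc (∑' i, g i) ^ p ≤ (N * s ^ p⁻¹) ^ p := rpow_le_rpow hsum hp.le
    _ = N ^ p * s := by rw [mul_rpow_of_nonneg _ _ hp.le, rpow_inv_rpow hp.ne']

theorem rpow_one_div_le_mul_of_le_rpow_mul {a b c : ℝ≥0∞} (hp : 0 < p) (h : a ≤ c ^ p * b) :
    a ^ (1 / p) ≤ c * b ^ (1 / p) := by
  refine (rpow_le_rpow h (by positivity)).trans_eq ?_
  rw [mul_rpow_of_nonneg _ _ (by positivity), ← rpow_mul, mul_one_div_cancel hp.ne', rpow_one]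

theorem rpow_one_div_mul_rpow (a b : ℝ≥0∞) (hp : 0 < p) :
    (a ^ (1 / p) * b) ^ p = a * b ^ p := by
  rw [mul_rpow_of_nonneg _ _ hp.le, ← rpow_mul, one_div_mul_cancel hp.ne', rpow_one]

theorem mul_indicator_one_rpow {X : Type*} (s : Set X) (c : ℝ≥0∞) (y : X) (hp : 0 < p) :
    (c * s.indicator (fun _ => 1) y) ^ p = c ^ p * s.indicator (fun _ => 1) y := by
  by_cases hy : y ∈ s <;> simp [hy, zero_rpow_of_pos hp]

theorem ofReal_le_ofReal_mul_of_max_div_le {a b C : ℝ} (hb : 0 < b)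
    (h : max (a / b) (b / a) ≤ C) : ENNReal.ofReal a ≤ ENNReal.ofReal C * ENNReal.ofReal b := by
  rw [← ofReal_mul' hb.le]
  exact ofReal_le_ofReal ((div_le_iff₀ hb).1 ((le_max_left _ _).trans h))

end ENNReal

section Overlap

variable {X I : Type*} [MeasurableSpace X] {μ : Measure X} {U : I → Set X} {p : ℝ}

theorem lintegral_tsum_mul_indicator_mul [Countable I] (hU : ∀ i, MeasurableSet (U i))
    (c : I → ℝ≥0∞) {f : X → ℝ≥0∞} (hf : Measurable f) :
    ∫⁻ y, (∑' i, c i * (U i).indicator (fun _ => 1) y) * f y ∂μ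
      = ∑' i, c i * ∫⁻ y in U i, f y ∂μ := by
  have hpoint : ∀ y, (∑' i, c i * (U i).indicator (fun _ => 1) y) * f y
      = ∑' i, c i * (U i).indicator f y := fun y => by
    rw [← ENNReal.tsum_mul_right]
    refine tsum_congr fun i => ?_
    by_cases hy : y ∈ U i <;> simp [hy]
  simp_rw [hpoint]
  rw [lintegral_tsum fun i => ((hf.indicator (hU i)).const_mul _).aemeasurable]
  exact tsum_congr fun i => by
    rw [lintegral_const_mul _ (hf.indicator (hU i)), lintegral_indicator (hU i)]

theorem tsum_rpow_mul_setLIntegral_le_lintegral [Countable I] (hU : ∀ i, MeasurableSet (U i))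
    (a : I → ℝ≥0∞) {f : X → ℝ≥0∞} (hf : Measurable f) (hp : 1 ≤ p) :
    ∑' i, a i ^ p * ∫⁻ y in U i, f y ∂μ
      ≤ ∫⁻ y, (∑' i, a i * (U i).indicator (fun _ => 1) y) ^ p * f y ∂μ := by
  rw [← lintegral_tsum_mul_indicator_mul hU _ hf]
  refine lintegral_mono fun y => mul_le_mul_left ?_ _
  simp_rw [← ENNReal.mul_indicator_one_rpow _ _ _ (zero_lt_one.trans_le hp)]
  exact ENNReal.tsum_rpow_le_rpow_tsum _ hp

theorem lintegral_le_rpow_mul_tsum_rpow_mul_setLIntegral [Countable I]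
    (hU : ∀ i, MeasurableSet (U i)) {N : ℕ} (hN : ∀ y, {i | y ∈ U i}.encard ≤ N)
    (a : I → ℝ≥0∞) {f : X → ℝ≥0∞} (hf : Measurable f) (hp : 0 < p) :
    ∫⁻ y, (∑' i, a i * (U i).indicator (fun _ => 1) y) ^ p * f y ∂μ
      ≤ (N : ℝ≥0∞) ^ p * ∑' i, a i ^ p * ∫⁻ y in U i, f y ∂μ := by
  rw [← lintegral_tsum_mul_indicator_mul hU _ hf,
    ← lintegral_const_mul' _ _ (ENNReal.rpow_ne_top_of_nonneg hp.le (ENNReal.natCast_ne_top N))]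
  refine lintegral_mono fun y => ?_
  have hsupp : (Function.support fun i => a i * (U i).indicator (fun _ => 1) y).encard ≤ N := by
    refine (Set.encard_mono fun i hi => ?_).trans (hN y)
    by_contra hy
    exact hi (by simp [Set.indicator_of_notMem (show y ∉ U i from hy)])
  rw [← mul_assoc]
  refine mul_le_mul_left ((ENNReal.rpow_tsum_le_of_encard_support_le hsupp hp).trans_eq ?_) _
  simp_rw [ENNReal.mul_indicator_one_rpow _ _ _ hp]

end Overlap

section Weight

variable {X : Type*} [MeasurableSpace X] {μ : Measure X} {f : X → ℝ≥0∞} {U : Set X} {p : ℝ}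

theorem setLIntegral_rpow_le_measure_mul_biSup_rpow (hp : 0 ≤ p) :
    ∫⁻ y in U, f y ^ p ∂μ ≤ μ U * (⨆ x ∈ U, f x) ^ p := by
  rw [mul_comm, ← setLIntegral_const]
  exact setLIntegral_mono measurable_const fun y hy => ENNReal.rpow_le_rpow (le_biSup f hy) hp

theorem measure_mul_biSup_rpow_le (hf : Measurable f) {k : ℝ≥0∞}
    (hk : ∀ x ∈ U, ∀ y ∈ U, f x ≤ k * f y) (hp : 0 ≤ p) :
    μ U * (⨆ x ∈ U, f x) ^ p ≤ k ^ p * ∫⁻ y in U, f y ^ p ∂μ := calc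
  μ U * (⨆ x ∈ U, f x) ^ p = ∫⁻ _ in U, (⨆ x ∈ U, f x) ^ p ∂μ := by
    rw [setLIntegral_const, mul_comm]
  _ ≤ ∫⁻ y in U, (k * f y) ^ p ∂μ :=
    setLIntegral_mono ((measurable_const.mul hf).pow_const p) fun y hy =>
      ENNReal.rpow_le_rpow (iSup₂_le fun x hx => hk x hx y hy) hp
  _ = k ^ p * ∫⁻ y in U, f y ^ p ∂μ := by
    simp_rw [ENNReal.mul_rpow_of_nonneg _ _ hp]
    exact lintegral_const_mul _ (hf.pow_const p)

end Weight

theorem stmt_2_general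
    {X : Type*} [MeasurableSpace X] (μ : Measure X)
    {I : Type*} [Countable I] (U : I → Set X)
    (hUmeas : ∀ i, MeasurableSet (U i))
    (N : ℕ) (hN : ∀ x : X, {i : I | x ∈ U i}.encard ≤ N)
    (w : X → ℝ) (hw : ∀ x, 0 < w x) (hwm : Measurable w)
    (p : ℝ) (hp : 1 ≤ p)
    (Cm : ℝ) (hCm : ∀ i, ∀ x ∈ U i, ∀ y ∈ U i, max (w x / w y) (w y / w x) ≤ Cm) :
    ∃ c C : ℝ≥0∞, 0 < c ∧ c ≤ C ∧ C < ∞ ∧ ∀ lam : I → ℂ,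
      c * (∑' i, (‖lam i‖₊ : ℝ≥0∞) ^ p
            * (μ (U i) ^ (1/p) * ⨆ x ∈ U i, ENNReal.ofReal (w x)) ^ p) ^ (1/p)
        ≤ (∫⁻ y, (∑' i, (‖lam i‖₊ : ℝ≥0∞) * (U i).indicator (fun _ => (1 : ℝ≥0∞)) y) ^ p
            * ENNReal.ofReal (w y) ^ p ∂μ) ^ (1/p)
      ∧ (∫⁻ y, (∑' i, (‖lam i‖₊ : ℝ≥0∞) * (U i).indicator (fun _ => (1 : ℝ≥0∞)) y) ^ p
            * ENNReal.ofReal (w y) ^ p ∂μ) ^ (1/p)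
        ≤ C * (∑' i, (‖lam i‖₊ : ℝ≥0∞) ^ p
            * (μ (U i) ^ (1/p) * ⨆ x ∈ U i, ENNReal.ofReal (w x)) ^ p) ^ (1/p) := by
  have hp0 : 0 < p := zero_lt_one.trans_le hp
  set k := ENNReal.ofReal Cm
  refine ⟨(max k 1)⁻¹, max N 1, ENNReal.inv_pos.2 (max_ne_top ENNReal.ofReal_ne_top
    ENNReal.one_ne_top), (ENNReal.inv_le_one.2 (le_max_right _ _)).trans (le_max_right _ _),
    max_lt (ENNReal.natCast_lt_top N) ENNReal.one_lt_top, fun lam => ?_⟩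
  simp only [ENNReal.rpow_one_div_mul_rpow _ _ hp0]
  set a : I → ℝ≥0∞ := fun i => ‖lam i‖₊
  have hf : Measurable fun x => ENNReal.ofReal (w x) := hwm.ennreal_ofReal
  set T := ∑' i, a i ^ p * ∫⁻ y in U i, ENNReal.ofReal (w y) ^ p ∂μ
  have hT_le_J := tsum_rpow_mul_setLIntegral_le_lintegral (μ := μ) hUmeas a (hf.pow_const p) hp
  have hJ_le_T := lintegral_le_rpow_mul_tsum_rpow_mul_setLIntegral (μ := μ) hUmeas hN a
    (hf.pow_const p) hp0
  have hT_le_S : T ≤ ∑' i, a i ^ p * (μ (U i) * (⨆ x ∈ U i, ENNReal.ofReal (w x)) ^ p) :=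
    ENNReal.tsum_le_tsum fun i =>
      mul_le_mul_right (setLIntegral_rpow_le_measure_mul_biSup_rpow hp0.le) _
  have hS_le_T : ∑' i, a i ^ p * (μ (U i) * (⨆ x ∈ U i, ENNReal.ofReal (w x)) ^ p) ≤ k ^ p * T := by
    rw [← ENNReal.tsum_mul_left]
    refine ENNReal.tsum_le_tsum fun i => ?_
    have hk : ∀ x ∈ U i, ∀ y ∈ U i, ENNReal.ofReal (w x) ≤ k * ENNReal.ofReal (w y) :=
      fun x hx y hy => ENNReal.ofReal_le_ofReal_mul_of_max_div_le (hw y) (hCm i x hx y hy)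
    calc _ ≤ a i ^ p * (k ^ p * ∫⁻ y in U i, ENNReal.ofReal (w y) ^ p ∂μ) :=
          mul_le_mul_right (measure_mul_biSup_rpow_le hf hk hp0.le) _
      _ = _ := mul_left_comm _ _ _
  constructor
  · rw [ENNReal.inv_mul_le_iff (by simp) (max_ne_top ENNReal.ofReal_ne_top ENNReal.one_ne_top)]
    refine ENNReal.rpow_one_div_le_mul_of_le_rpow_mul hp0 ?_
    exact hS_le_T.trans (mul_le_mul' (ENNReal.rpow_le_rpow (le_max_left _ _) hp0.le) hT_le_J)
  · refine ENNReal.rpow_one_div_le_mul_of_le_rpow_mul hp0 ?_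
    exact hJ_le_T.trans (mul_le_mul' (ENNReal.rpow_le_rpow (le_max_left _ _) hp0.le) hT_le_S)

/-- **Theorem 5.2(c), flat sequence space.** `(L^p_w)^♭ = ℓ^p_{b_p}` with equivalent
norms, where `b_p(i) = μ(U_i)^{1/p} w̃(i)` and `w̃(i) = sup_{x ∈ U_i} w(x)`. -/
theorem stmt_2
    {X : Type*} [MeasurableSpace X] (μ : Measure X)
    {I : Type*} [Countable I] (U : I → Set X)
    (hUmeas : ∀ i, MeasurableSet (U i))
    (hUpos : ∀ i, 0 < μ (U i)) (hUfin : ∀ i, μ (U i) < ∞)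
    (hcov : ∀ x : X, ∃ i, x ∈ U i)
    (N : ℕ) (hN : ∀ x : X, {i : I | x ∈ U i}.encard ≤ N)
    (w : X → ℝ) (hw : ∀ x, 0 < w x) (hwm : Measurable w)
    (p : ℝ) (hp : 1 ≤ p)
    (Cm : ℝ) (hCm : ∀ i, ∀ x ∈ U i, ∀ y ∈ U i, max (w x / w y) (w y / w x) ≤ Cm) :
    ∃ c C : ℝ≥0∞, 0 < c ∧ c ≤ C ∧ C < ∞ ∧ ∀ lam : I → ℂ,
      c * (∑' i, (‖lam i‖₊ : ℝ≥0∞) ^ p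
            * (μ (U i) ^ (1/p) * ⨆ x ∈ U i, ENNReal.ofReal (w x)) ^ p) ^ (1/p)
        ≤ (∫⁻ y, (∑' i, (‖lam i‖₊ : ℝ≥0∞) * (U i).indicator (fun _ => (1 : ℝ≥0∞)) y) ^ p
            * ENNReal.ofReal (w y) ^ p ∂μ) ^ (1/p)
      ∧ (∫⁻ y, (∑' i, (‖lam i‖₊ : ℝ≥0∞) * (U i).indicator (fun _ => (1 : ℝ≥0∞)) y) ^ p
            * ENNReal.ofReal (w y) ^ p ∂μ) ^ (1/p)
        ≤ C * (∑' i, (‖lam i‖₊ : ℝ≥0∞) ^ p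
            * (μ (U i) ^ (1/p) * ⨆ x ∈ U i, ENNReal.ofReal (w x)) ^ p) ^ (1/p) :=
  stmt_2_general μ U hUmeas N hN w hw hwm p hp Cm hCm
end

section
/- Let 1 ≤ p < ∞, suppose sup_{x,y∈U_i} m_w(x,y) ≤ C_m for all i ∈ I, where m_w(x,y) = max(w(x)/w(y), w(y)/w(x)), and suppose μ(U_i) ≥ D > 0 for all i. Fix z ∈ X, set v(x) = m_w(x,z), ṽ(i) = sup_{x∈U_i} v(x), r(i) = ṽ(i) μ(U_i), and d_p(i) = μ(U_i)^{1/p − 1} w̃(i) with w̃(i) = sup_{x∈U_i} w(x). Then for every sequence (λ_i)_{i∈I} of complex numbers and every i ∈ I: |λ_i| ≤ D^{−1/p} C_m w(z)^{−1} · r(i) · (Σ_{j∈I} |λ_j|^p d_p(j)^p)^{1/p}. (Theorem 5.2(d) specialized to Y = L^p_w: the continuous embedding (L^p_w)^♮ ⊆ ℓ^∞_{1/r}.) -/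
open MeasureTheory
open scoped ENNReal NNReal

/-- **Theorem 5.2(d) specialized to `Y = L^p_w`.** The continuous embedding
`(L^p_w)^♮ ⊆ ℓ^∞_{1/r}`: with `v(x) = m_w(x,z)`, `ṽ(i) = sup_{x ∈ U_i} v(x)`,
`r(i) = ṽ(i) μ(U_i)` and `d_p(i) = μ(U_i)^{1/p-1} w̃(i)`, one has
`|λ_i| ≤ D^{-1/p} C_m w(z)^{-1} r(i) (Σ_j |λ_j|^p d_p(j)^p)^{1/p}`. -/
theorem stmt_5
    {X : Type*} [MeasurableSpace X] (μ : Measure X)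
    {I : Type*} [Countable I] (U : I → Set X)
    (hUmeas : ∀ i, MeasurableSet (U i))
    (hUpos : ∀ i, 0 < μ (U i)) (hUfin : ∀ i, μ (U i) < ∞)
    (hcov : ∀ x : X, ∃ i, x ∈ U i)
    (N : ℕ) (hN : ∀ x : X, {i : I | x ∈ U i}.encard ≤ N)
    (w : X → ℝ) (hw : ∀ x, 0 < w x) (hwm : Measurable w)
    (p : ℝ) (hp : 1 ≤ p)
    (Cm : ℝ) (hCm : ∀ i, ∀ x ∈ U i, ∀ y ∈ U i, max (w x / w y) (w y / w x) ≤ Cm)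
    (D : ℝ≥0∞) (hD : 0 < D) (hUD : ∀ i, D ≤ μ (U i))
    (z : X) (lam : I → ℂ) (i : I) :
    (‖lam i‖₊ : ℝ≥0∞)
      ≤ D ^ (-(1/p)) * ENNReal.ofReal Cm * (ENNReal.ofReal (w z))⁻¹
        * ((⨆ x ∈ U i, ENNReal.ofReal (max (w x / w z) (w z / w x))) * μ (U i))
        * (∑' j, (‖lam j‖₊ : ℝ≥0∞) ^ p
            * (μ (U j) ^ (1/p - 1) * ⨆ x ∈ U j, ENNReal.ofReal (w x)) ^ p) ^ (1/p) := by
  classical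
  have hp0 : (0:ℝ) < p := lt_of_lt_of_le one_pos hp
  have hip0 : (0:ℝ) < 1/p := by positivity
  set a : ℝ≥0∞ := (‖lam i‖₊ : ℝ≥0∞) with ha
  set A : ℝ≥0∞ := μ (U i) with hAdef
  set V : ℝ≥0∞ := ⨆ x ∈ U i, ENNReal.ofReal (max (w x / w z) (w z / w x)) with hVdef
  set W : ℝ≥0∞ := ⨆ x ∈ U i, ENNReal.ofReal (w x) with hWdef
  set d : ℝ≥0∞ := A ^ (1/p - 1) * W with hddef
  set K : ℝ≥0∞ := D ^ (-(1/p)) * ENNReal.ofReal Cm * (ENNReal.ofReal (w z))⁻¹ * (V * A)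
    with hKdef
  -- the set U i is nonempty
  obtain ⟨x₀, hx₀⟩ : (U i).Nonempty := by
    rw [Set.nonempty_iff_ne_empty]
    intro h
    have := hUpos i
    rw [h] at this
    simp at this
  have hA0 : A ≠ 0 := (hUpos i).ne'
  have hAtop : A ≠ ∞ := (hUfin i).ne
  have hD0 : D ≠ 0 := hD.ne'
  have hDtop : D ≠ ∞ := ((lt_of_le_of_lt (hUD i) (hUfin i))).ne
  -- Step 1 : 1 ≤ D^{-(1/p)} * A^{1/p}
  have step1 : (1:ℝ≥0∞) ≤ D ^ (-(1/p)) * A ^ (1/p) := by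
    have h1 : (1:ℝ≥0∞) = D ^ (-(1/p)) * D ^ (1/p) := by
      rw [← ENNReal.rpow_add _ _ hD0 hDtop]
      simp
    rw [h1]
    exact mul_le_mul_right (ENNReal.rpow_le_rpow (hUD i) hip0.le) _
  -- Step 2 : 1 ≤ Cm * wz⁻¹ * V * W
  have hwz0 : ENNReal.ofReal (w z) ≠ 0 := by
    exact (ENNReal.ofReal_pos.mpr (hw z)).ne'
  have step2 : (1:ℝ≥0∞) ≤ ENNReal.ofReal Cm * (ENNReal.ofReal (w z))⁻¹ * V * W := by
    have hCm1 : (1:ℝ) ≤ Cm := by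
      have := hCm i x₀ hx₀ x₀ hx₀
      rwa [div_self (hw x₀).ne', max_self] at this
    have hV : ENNReal.ofReal (w z / w x₀) ≤ V := by
      refine le_trans ?_ (le_iSup₂ (f := fun x (_ : x ∈ U i) =>
        ENNReal.ofReal (max (w x / w z) (w z / w x))) x₀ hx₀)
      exact ENNReal.ofReal_le_ofReal (le_max_right _ _)
    have hWle : ENNReal.ofReal (w x₀) ≤ W :=
      le_iSup₂ (f := fun x (_ : x ∈ U i) => ENNReal.ofReal (w x)) x₀ hx₀
    have key : (1:ℝ≥0∞)
        = ENNReal.ofReal 1 * (ENNReal.ofReal (w z))⁻¹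
          * ENNReal.ofReal (w z / w x₀) * ENNReal.ofReal (w x₀) := by
      rw [mul_assoc, ← ENNReal.ofReal_mul (div_pos (hw z) (hw x₀)).le,
        div_mul_cancel₀ _ (hw x₀).ne']
      rw [ENNReal.ofReal_one, one_mul, ENNReal.inv_mul_cancel hwz0 ENNReal.ofReal_ne_top]
    rw [key]
    exact mul_le_mul' (mul_le_mul' (mul_le_mul'
      (ENNReal.ofReal_le_ofReal hCm1) le_rfl) hV) hWle
  -- Step 3 : 1 ≤ K * d
  have step3 : (1:ℝ≥0∞) ≤ K * d := by
    have hre : K * d = (D ^ (-(1/p)) * (A * A ^ (1/p - 1)))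
        * (ENNReal.ofReal Cm * (ENNReal.ofReal (w z))⁻¹ * V * W) := by
      rw [hKdef, hddef]; ring
    have hAA : A * A ^ (1/p - 1) = A ^ (1/p) := by
      nth_rewrite 1 [← ENNReal.rpow_one A]
      rw [← ENNReal.rpow_add _ _ hA0 hAtop]
      ring_nf
    rw [hre, hAA]
    calc (1:ℝ≥0∞) = 1 * 1 := (one_mul 1).symm
      _ ≤ _ := mul_le_mul' step1 step2
  -- Step 4 : the tsum is bounded below by its i-th term
  have step4 : (a ^ p * d ^ p) ^ (1/p)
      ≤ (∑' j, (‖lam j‖₊ : ℝ≥0∞) ^ p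
          * (μ (U j) ^ (1/p - 1) * ⨆ x ∈ U j, ENNReal.ofReal (w x)) ^ p) ^ (1/p) := by
    exact ENNReal.rpow_le_rpow (ENNReal.le_tsum i) hip0.le
  have had : (a ^ p * d ^ p) ^ (1/p) = a * d := by
    rw [ENNReal.mul_rpow_of_nonneg _ _ hip0.le, ← ENNReal.rpow_mul, ← ENNReal.rpow_mul,
      mul_one_div_cancel hp0.ne', ENNReal.rpow_one, ENNReal.rpow_one]
  -- Conclusion
  have : a ≤ K * (a * d) := by
    calc a = 1 * a := (one_mul a).symm
      _ ≤ (K * d) * a := mul_le_mul_left step3 a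
      _ = K * (a * d) := by ring
  calc a ≤ K * (a * d) := this
    _ = K * (a ^ p * d ^ p) ^ (1/p) := by rw [had]
    _ ≤ _ := mul_le_mul_right step4 K
end

section
/- Let (U_i)_{i∈I} and (V_i)_{i∈I} be two families of measurable subsets of X over the same countable index set, with 0 < μ(V_i) < ∞ and μ(U_i) < ∞, such that every x ∈ X lies in at most N of the sets U_i and in at most N' of the sets V_i. Suppose there are constants C₁ > 0 and C' with C₁ μ(U_i) ≤ μ(V_i) for all i, and sup_{x∈U_i} sup_{y∈V_i} m(x,y) ≤ C' for all i. Define L(x,y) = Σ_{j∈I} χ_{U_j}(x) χ_{V_j}(y) μ(V_j)^{-1}. Then: (1) for all x ∈ X, ∫_X L(x,y) m(x,y) dμ(y) ≤ C' N; and (2) for all y ∈ X, ∫_X L(x,y) m(x,y) dμ(x) ≤ C' C₁^{-1} N'. (Kernel estimates from the proof of Lemma 5.3.) -/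
open MeasureTheory
open scoped ENNReal

/-!
Since `m ≤ C'` on every `U j × V j`, the weight can be pulled out of the kernel
`L = overlapKernel μ U V` as the constant `C'`. Integrating the `j`-th term of `L(x, ·)` gives
at most `χ_{U_j}(x)`, and integrating the `j`-th term of `L(·, y)` gives at most
`C₁⁻¹ χ_{V_j}(y)` because `μ(U_j) ≤ C₁⁻¹ μ(V_j)`; summing over `j`, the bounded overlap turns
these sums into `N` and `N'`.
-/

section OverlapKernel

variable {X I : Type*}

theorem tsum_indicator_one_eq_encard (U : I → Set X) (x : X) :
    ∑' j, (U j).indicator (fun _ => (1 : ℝ≥0∞)) x = {i | x ∈ U i}.encard := by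
  rw [← ENNReal.tsum_set_one, tsum_subtype _ fun _ => 1]
  congr 1 with j

theorem tsum_indicator_one_le_of_encard_le {U : I → Set X} {x : X} {N : ℕ}
    (hN : {i | x ∈ U i}.encard ≤ N) :
    ∑' j, (U j).indicator (fun _ => (1 : ℝ≥0∞)) x ≤ N := by
  rw [tsum_indicator_one_eq_encard]
  exact_mod_cast hN

theorem ENNReal.mul_inv_le_inv_of_mul_le {a b c : ℝ≥0∞} (h : c * a ≤ b) : a * b⁻¹ ≤ c⁻¹ :=
  ENNReal.le_inv_iff_mul_le.2 <| calc
    a * b⁻¹ * c = c * a * b⁻¹ := by ring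
    _ ≤ b * b⁻¹ := by gcongr
    _ ≤ 1 := ENNReal.mul_inv_le_one b

variable [MeasurableSpace X] (μ : Measure X) (U V : I → Set X)

theorem lintegral_mul_ofReal_le {f : X → ℝ≥0∞} {g : X → ℝ} {C : ℝ}
    (h : ∀ y, f y * ENNReal.ofReal (g y) ≤ f y * ENNReal.ofReal C) :
    ∫⁻ y, f y * ENNReal.ofReal (g y) ∂μ ≤ (∫⁻ y, f y ∂μ) * ENNReal.ofReal C :=
  (lintegral_mono h).trans_eq (lintegral_mul_const' _ _ ENNReal.ofReal_ne_top)

noncomputable def overlapKernel (x y : X) : ℝ≥0∞ :=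
  ∑' j, (U j).indicator (fun _ => (1 : ℝ≥0∞)) x
    * (V j).indicator (fun _ => (1 : ℝ≥0∞)) y * (μ (V j))⁻¹

variable {μ U V}

theorem overlapKernel_mul_ofReal_le {f : X → X → ℝ} {C : ℝ}
    (hf : ∀ i, ∀ x ∈ U i, ∀ y ∈ V i, f x y ≤ C) (x y : X) :
    overlapKernel μ U V x y * ENNReal.ofReal (f x y)
      ≤ overlapKernel μ U V x y * ENNReal.ofReal C := by
  simp only [overlapKernel, ← ENNReal.tsum_mul_right]
  refine ENNReal.tsum_le_tsum fun j => ?_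
  by_cases hx : x ∈ U j
  · by_cases hy : y ∈ V j
    · gcongr
      exact hf j x hx y hy
    · simp [hy]
  · simp [hx]

variable [Countable I]

theorem lintegral_overlapKernel_right_le (hV : ∀ i, MeasurableSet (V i)) {x : X} {N : ℕ}
    (hN : {i | x ∈ U i}.encard ≤ N) :
    ∫⁻ y, overlapKernel μ U V x y ∂μ ≤ N := by
  simp only [overlapKernel]
  rw [lintegral_tsum fun j =>
    (((measurable_const.indicator (hV j)).const_mul _).mul_const _).aemeasurable]
  refine le_trans (ENNReal.tsum_le_tsum fun j => ?_) (tsum_indicator_one_le_of_encard_le hN)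
  calc ∫⁻ y, (U j).indicator (fun _ => 1) x * (V j).indicator (fun _ => 1) y * (μ (V j))⁻¹ ∂μ
      = (U j).indicator (fun _ => 1) x * (μ (V j) * (μ (V j))⁻¹) := by
        rw [lintegral_mul_const _ ((measurable_const.indicator (hV j)).const_mul _),
          lintegral_const_mul _ (measurable_const.indicator (hV j)),
          lintegral_indicator_const (hV j), one_mul, mul_assoc]
    _ ≤ (U j).indicator (fun _ => 1) x := mul_le_of_le_one_right' (ENNReal.mul_inv_le_one _)

theorem lintegral_overlapKernel_left_le (hU : ∀ i, MeasurableSet (U i)) {C₁ : ℝ≥0∞}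
    (hUV : ∀ i, C₁ * μ (U i) ≤ μ (V i)) {y : X} {N' : ℕ}
    (hN' : {i | y ∈ V i}.encard ≤ N') :
    ∫⁻ x, overlapKernel μ U V x y ∂μ ≤ C₁⁻¹ * N' := by
  simp only [overlapKernel]
  rw [lintegral_tsum fun j =>
    (((measurable_const.indicator (hU j)).mul_const _).mul_const _).aemeasurable]
  calc ∑' j, ∫⁻ x, (U j).indicator (fun _ => 1) x * (V j).indicator (fun _ => 1) y
        * (μ (V j))⁻¹ ∂μ
      = ∑' j, (V j).indicator (fun _ => 1) y * (μ (U j) * (μ (V j))⁻¹) := by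
        congr 1 with j
        rw [lintegral_mul_const _ ((measurable_const.indicator (hU j)).mul_const _),
          lintegral_mul_const _ (measurable_const.indicator (hU j)),
          lintegral_indicator_const (hU j), one_mul, mul_comm (μ (U j)), mul_assoc]
    _ ≤ ∑' j, (V j).indicator (fun _ => 1) y * C₁⁻¹ :=
        ENNReal.tsum_le_tsum fun j => by gcongr; exact ENNReal.mul_inv_le_inv_of_mul_le (hUV j)
    _ ≤ C₁⁻¹ * N' := by
        rw [ENNReal.tsum_mul_right, mul_comm]
        gcongr
        exact tsum_indicator_one_le_of_encard_le hN'

end OverlapKernel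

theorem stmt_6_general
    {X : Type*} [MeasurableSpace X] (μ : Measure X)
    {I : Type*} [Countable I] (U V : I → Set X)
    (hUmeas : ∀ i, MeasurableSet (U i)) (hVmeas : ∀ i, MeasurableSet (V i))
    (N N' : ℕ)
    (hNU : ∀ x : X, {i : I | x ∈ U i}.encard ≤ N)
    (hNV : ∀ x : X, {i : I | x ∈ V i}.encard ≤ N')
    (m : X → X → ℝ)
    (C₁ : ℝ≥0∞) (hμUV : ∀ i, C₁ * μ (U i) ≤ μ (V i))
    (C' : ℝ) (hC' : ∀ i, ∀ x ∈ U i, ∀ y ∈ V i, m x y ≤ C') :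
    (∀ x : X,
      ∫⁻ y, (∑' j, (U j).indicator (fun _ => (1 : ℝ≥0∞)) x
          * (V j).indicator (fun _ => (1 : ℝ≥0∞)) y * (μ (V j))⁻¹)
          * ENNReal.ofReal (m x y) ∂μ
        ≤ ENNReal.ofReal C' * N)
    ∧
    (∀ y : X,
      ∫⁻ x, (∑' j, (U j).indicator (fun _ => (1 : ℝ≥0∞)) x
          * (V j).indicator (fun _ => (1 : ℝ≥0∞)) y * (μ (V j))⁻¹)
          * ENNReal.ofReal (m x y) ∂μ
        ≤ ENNReal.ofReal C' * C₁⁻¹ * N') := by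
  refine ⟨fun x => ?_, fun y => ?_⟩
  · calc _ ≤ (∫⁻ y, overlapKernel μ U V x y ∂μ) * ENNReal.ofReal C' :=
          lintegral_mul_ofReal_le μ (overlapKernel_mul_ofReal_le hC' x)
      _ ≤ N * ENNReal.ofReal C' := by
          gcongr
          exact lintegral_overlapKernel_right_le hVmeas (hNU x)
      _ = _ := mul_comm _ _
  · calc _ ≤ (∫⁻ x, overlapKernel μ U V x y ∂μ) * ENNReal.ofReal C' :=
          lintegral_mul_ofReal_le μ (overlapKernel_mul_ofReal_le hC' · y)
      _ ≤ C₁⁻¹ * N' * ENNReal.ofReal C' := by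
          gcongr
          exact lintegral_overlapKernel_left_le hUmeas hμUV (hNV y)
      _ = _ := by ring

/-- **Kernel estimates from the proof of Lemma 5.3.** For the kernel
`L(x,y) = Σ_j χ_{U_j}(x) χ_{V_j}(y) μ(V_j)⁻¹` one has
`∫_X L(x,y) m(x,y) dμ(y) ≤ C' N` and `∫_X L(x,y) m(x,y) dμ(x) ≤ C' C₁⁻¹ N'`. -/
theorem stmt_6
    {X : Type*} [MeasurableSpace X] (μ : Measure X)
    {I : Type*} [Countable I] (U V : I → Set X)
    (hUmeas : ∀ i, MeasurableSet (U i)) (hVmeas : ∀ i, MeasurableSet (V i))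
    (hVpos : ∀ i, 0 < μ (V i)) (hVfin : ∀ i, μ (V i) < ∞) (hUfin : ∀ i, μ (U i) < ∞)
    (N N' : ℕ)
    (hNU : ∀ x : X, {i : I | x ∈ U i}.encard ≤ N)
    (hNV : ∀ x : X, {i : I | x ∈ V i}.encard ≤ N')
    (m : X → X → ℝ) (hm1 : ∀ x y, 1 ≤ m x y) (hmsymm : ∀ x y, m x y = m y x)
    (hmsub : ∀ x y z, m x y ≤ m x z * m z y) (hmmeas : Measurable (Function.uncurry m))
    (C₁ : ℝ≥0∞) (hC₁ : 0 < C₁) (hμUV : ∀ i, C₁ * μ (U i) ≤ μ (V i))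
    (C' : ℝ) (hC' : ∀ i, ∀ x ∈ U i, ∀ y ∈ V i, m x y ≤ C') :
    (∀ x : X,
      ∫⁻ y, (∑' j, (U j).indicator (fun _ => (1 : ℝ≥0∞)) x
          * (V j).indicator (fun _ => (1 : ℝ≥0∞)) y * (μ (V j))⁻¹)
          * ENNReal.ofReal (m x y) ∂μ
        ≤ ENNReal.ofReal C' * N)
    ∧
    (∀ y : X,
      ∫⁻ x, (∑' j, (U j).indicator (fun _ => (1 : ℝ≥0∞)) x
          * (V j).indicator (fun _ => (1 : ℝ≥0∞)) y * (μ (V j))⁻¹)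
          * ENNReal.ofReal (m x y) ∂μ
        ≤ ENNReal.ofReal C' * C₁⁻¹ * N') :=
  stmt_6_general μ U V hUmeas hVmeas N N' hNU hNV m C₁ hμUV C' hC'
end

section
/- Let 1 ≤ p < ∞, suppose μ(U_i) ≥ D > 0 for all i, and suppose sup_{x,y∈U_i} m_w(x,y) ≤ C_m for all i, where m_w(x,y) = max(w(x)/w(y), w(y)/w(x)). Fix z ∈ X and set v(x) = m_w(x,z). Then there exists a constant C, depending only on N, D, C_m, p and w(z), such that for every F ∈ L^p_w and every x ∈ X: Σ_{i∈I} ( ∫_{U_i} |F(y)| dμ(y) ) μ(U_i)^{-1} χ_{U_i}(x) ≤ C v(x) ‖F‖_{L^p_w}. (Lemma 5.5(a) specialized to Y = L^p_w: the embedding L^p_w ⊆ D(𝒰, L¹, (L^∞_{1/v})^♮).) -/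
/-!
On each `U i` the weight varies by at most the factor `Cm`, so for `x ∈ U i` the average of `|F|`
over `U i` is at most `Cm / w(x)` times the average of `|F| w`, which Hölder's inequality bounds by
`‖F‖_{L^p_w} μ(U i)^{-1/p} ≤ ‖F‖_{L^p_w} D^{-1/p}`. At most `N` sets contain `x`, and
`1 / w(x) ≤ v(x) / w(z)`.
-/

open MeasureTheory
open scoped ENNReal NNReal

theorem ENNReal.tsum_mul_indicator_le_of_encard_le {ι α : Type*} {U : ι → Set α} {x : α}
    {f : ι → ℝ≥0∞} {B : ℝ≥0∞} {N : ℕ} (hN : {i | x ∈ U i}.encard ≤ N)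
    (hf : ∀ i, x ∈ U i → f i ≤ B) :
    ∑' i, f i * (U i).indicator (fun _ => 1) x ≤ N * B := by
  calc ∑' i, f i * (U i).indicator (fun _ => 1) x
      ≤ ∑' i, {i | x ∈ U i}.indicator (fun _ => B) i :=
        ENNReal.tsum_le_tsum fun i => by by_cases hi : x ∈ U i <;> simp [hi, hf]
    _ = {i | x ∈ U i}.encard * B := by
        rw [← tsum_subtype, ENNReal.tsum_set_const]
    _ ≤ N * B := by
        gcongr
        exact_mod_cast hN

theorem ENNReal.inv_ofReal_le_ofReal_max_div_mul_inv_ofReal {a b : ℝ} (ha : 0 < a) (hb : 0 < b) :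
    (ENNReal.ofReal a)⁻¹ ≤ ENNReal.ofReal (max (a / b) (b / a)) * (ENNReal.ofReal b)⁻¹ := by
  rw [← ENNReal.ofReal_inv_of_pos ha, ← ENNReal.ofReal_inv_of_pos hb,
    ← ENNReal.ofReal_mul' (inv_nonneg.mpr hb.le)]
  apply ENNReal.ofReal_le_ofReal
  calc a⁻¹ = b / a * b⁻¹ := by field_simp
    _ ≤ max (a / b) (b / a) * b⁻¹ := by gcongr; exact le_max_right _ _

section SetIntegral

variable {α : Type*} [MeasurableSpace α] {μ : Measure α} {s : Set α}

theorem setLIntegral_mul_inv_measure_le {g : α → ℝ≥0∞} (hg : AEMeasurable g (μ.restrict s))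
    (hs₀ : μ s ≠ 0) (hs : μ s ≠ ∞) {p : ℝ} (hp : 1 ≤ p) :
    (∫⁻ y in s, g y ∂μ) * (μ s)⁻¹ ≤ (∫⁻ y in s, g y ^ p ∂μ) ^ (1 / p) * μ s ^ (-(1 / p)) := by
  have holder := eLpNorm'_le_eLpNorm'_mul_rpow_measure_univ one_pos hp hg.aestronglyMeasurable
  simp only [eLpNorm'_eq_lintegral_enorm, enorm_eq_self, ENNReal.rpow_one, div_one,
    Measure.restrict_apply_univ] at holder
  calc (∫⁻ y in s, g y ∂μ) * (μ s)⁻¹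
      ≤ (∫⁻ y in s, g y ^ p ∂μ) ^ (1 / p) * (μ s ^ (1 - 1 / p) * (μ s)⁻¹) := by
        rw [← mul_assoc]
        gcongr
    _ = (∫⁻ y in s, g y ^ p ∂μ) ^ (1 / p) * μ s ^ (-(1 / p)) := by
        rw [← ENNReal.rpow_neg_one, ← ENNReal.rpow_add _ _ hs₀ hs]
        ring_nf

theorem setLIntegral_le_mul_setLIntegral_mul_ofReal {f : α → ℝ≥0∞} {w : α → ℝ}
    (hf : Measurable f) (hwm : Measurable w) (hw : ∀ y ∈ s, 0 < w y) {a c : ℝ} (ha : 0 < a)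
    (hc : ∀ y ∈ s, a / w y ≤ c) :
    ∫⁻ y in s, f y ∂μ ≤
      ENNReal.ofReal c * (ENNReal.ofReal a)⁻¹ * ∫⁻ y in s, f y * ENNReal.ofReal (w y) ∂μ := by
  have hfw : Measurable fun y => f y * ENNReal.ofReal (w y) := hf.mul hwm.ennreal_ofReal
  rw [← lintegral_const_mul _ hfw]
  refine setLIntegral_mono (hfw.const_mul _) fun y hy => ?_
  have hone : 1 ≤ ENNReal.ofReal c * (ENNReal.ofReal a)⁻¹ * ENNReal.ofReal (w y) := by
    rw [← ENNReal.ofReal_inv_of_pos ha, ← ENNReal.ofReal_mul' (inv_nonneg.mpr ha.le),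
      ← ENNReal.ofReal_mul' (hw y hy).le, ENNReal.one_le_ofReal]
    have := (div_le_iff₀ (hw y hy)).mp (hc y hy)
    rw [mul_comm c, mul_assoc, le_inv_mul_iff₀ ha]
    linarith
  calc f y = f y * 1 := (mul_one _).symm
    _ ≤ f y * (ENNReal.ofReal c * (ENNReal.ofReal a)⁻¹ * ENNReal.ofReal (w y)) := by gcongr
    _ = _ := by ring

theorem setLIntegral_mul_inv_measure_le_of_weight_ratio_le {f : α → ℝ≥0∞} {w : α → ℝ}
    (hf : Measurable f) (hwm : Measurable w) (hw : ∀ y ∈ s, 0 < w y) {x : α} (hx : x ∈ s)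
    {c : ℝ} (hc : ∀ y ∈ s, w x / w y ≤ c) {D : ℝ≥0∞} (hD : 0 < D) (hDs : D ≤ μ s)
    (hs : μ s ≠ ∞) {p : ℝ} (hp : 1 ≤ p) :
    (∫⁻ y in s, f y ∂μ) * (μ s)⁻¹ ≤ ENNReal.ofReal c * (ENNReal.ofReal (w x))⁻¹ *
      ((∫⁻ y, f y ^ p * ENNReal.ofReal (w y) ^ p ∂μ) ^ (1 / p) * D ^ (-(1 / p))) := by
  have hp₀ : 0 < p := one_pos.trans_le hp
  have hfw : Measurable fun y => f y * ENNReal.ofReal (w y) := hf.mul hwm.ennreal_ofReal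
  have hmass : μ s ^ (-(1 / p)) ≤ D ^ (-(1 / p)) := by
    rw [ENNReal.rpow_neg, ENNReal.rpow_neg]
    gcongr
  calc (∫⁻ y in s, f y ∂μ) * (μ s)⁻¹
      ≤ ENNReal.ofReal c * (ENNReal.ofReal (w x))⁻¹ *
          ((∫⁻ y in s, f y * ENNReal.ofReal (w y) ∂μ) * (μ s)⁻¹) := by
        rw [← mul_assoc]
        gcongr
        exact setLIntegral_le_mul_setLIntegral_mul_ofReal hf hwm hw (hw x hx) hc
    _ ≤ ENNReal.ofReal c * (ENNReal.ofReal (w x))⁻¹ *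
          ((∫⁻ y in s, (f y * ENNReal.ofReal (w y)) ^ p ∂μ) ^ (1 / p) * μ s ^ (-(1 / p))) := by
        gcongr _ * ?_
        exact setLIntegral_mul_inv_measure_le hfw.aemeasurable (hD.trans_le hDs).ne' hs hp
    _ ≤ _ := by
        simp only [ENNReal.mul_rpow_of_nonneg _ _ hp₀.le]
        gcongr _ * (?_ ^ _ * ?_)
        exact setLIntegral_le_lintegral _ _

end SetIntegral

theorem stmt_11_general
    {X : Type*} [MeasurableSpace X] (μ : Measure X)
    {I : Type*} (U : I → Set X)
    (hUfin : ∀ i, μ (U i) < ∞)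
    (N : ℕ) (hN : ∀ x : X, {i : I | x ∈ U i}.encard ≤ N)
    (w : X → ℝ) (hw : ∀ x, 0 < w x) (hwm : Measurable w)
    (p : ℝ) (hp : 1 ≤ p)
    (D : ℝ≥0∞) (hD : 0 < D) (hUD : ∀ i, D ≤ μ (U i))
    (Cm : ℝ) (hCm : ∀ i, ∀ x ∈ U i, ∀ y ∈ U i, max (w x / w y) (w y / w x) ≤ Cm)
    (z : X) :
    ∃ C : ℝ≥0∞, C < ∞ ∧ ∀ F : X → ℂ, Measurable F →
      (∫⁻ x, (‖F x‖₊ : ℝ≥0∞) ^ p * ENNReal.ofReal (w x) ^ p ∂μ) < ∞ →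
      ∀ x : X,
        ∑' i, (∫⁻ y in U i, (‖F y‖₊ : ℝ≥0∞) ∂μ) * (μ (U i))⁻¹
            * (U i).indicator (fun _ => (1 : ℝ≥0∞)) x
          ≤ C * ENNReal.ofReal (max (w x / w z) (w z / w x))
            * (∫⁻ y, (‖F y‖₊ : ℝ≥0∞) ^ p * ENNReal.ofReal (w y) ^ p ∂μ) ^ (1/p) := by
  have hD' : D ^ (-(1 / p)) ≠ ∞ := by
    simp [ENNReal.rpow_neg, hD.ne', (one_pos.trans_le hp).le]
  refine ⟨N * ENNReal.ofReal Cm * (ENNReal.ofReal (w z))⁻¹ * D ^ (-(1 / p)), ?_, ?_⟩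
  · have := ENNReal.ofReal_pos.mpr (hw z)
    finiteness
  intro F hF _ x
  set J := ∫⁻ y, (‖F y‖₊ : ℝ≥0∞) ^ p * ENNReal.ofReal (w y) ^ p ∂μ
  calc _ ≤ N * (ENNReal.ofReal Cm * (ENNReal.ofReal (w x))⁻¹ * (J ^ (1 / p) * D ^ (-(1 / p)))) :=
        ENNReal.tsum_mul_indicator_le_of_encard_le (hN x) fun i hx =>
          setLIntegral_mul_inv_measure_le_of_weight_ratio_le hF.nnnorm.coe_nnreal_ennreal hwm
            (fun y _ => hw y) hx (fun y hy => (le_max_left _ _).trans (hCm i x hx y hy)) hD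
            (hUD i) (hUfin i).ne hp
    _ ≤ N * (ENNReal.ofReal Cm * (ENNReal.ofReal (max (w x / w z) (w z / w x))
          * (ENNReal.ofReal (w z))⁻¹) * (J ^ (1 / p) * D ^ (-(1 / p)))) := by
        gcongr
        exact ENNReal.inv_ofReal_le_ofReal_max_div_mul_inv_ofReal (hw x) (hw z)
    _ = _ := by ring

/-- **Lemma 5.5(a) specialized to `Y = L^p_w`.** The embedding
`L^p_w ⊆ D(𝒰, L¹, (L^∞_{1/v})^♮)`: with `v(x) = m_w(x,z)` one has
`Σ_i (∫_{U_i} |F| dμ) μ(U_i)⁻¹ χ_{U_i}(x) ≤ C v(x) ‖F‖_{L^p_w}`. -/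
theorem stmt_11
    {X : Type*} [MeasurableSpace X] (μ : Measure X)
    {I : Type*} [Countable I] (U : I → Set X)
    (hUmeas : ∀ i, MeasurableSet (U i))
    (hUpos : ∀ i, 0 < μ (U i)) (hUfin : ∀ i, μ (U i) < ∞)
    (hcov : ∀ x : X, ∃ i, x ∈ U i)
    (N : ℕ) (hN : ∀ x : X, {i : I | x ∈ U i}.encard ≤ N)
    (w : X → ℝ) (hw : ∀ x, 0 < w x) (hwm : Measurable w)
    (p : ℝ) (hp : 1 ≤ p)
    (D : ℝ≥0∞) (hD : 0 < D) (hUD : ∀ i, D ≤ μ (U i))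
    (Cm : ℝ) (hCm : ∀ i, ∀ x ∈ U i, ∀ y ∈ U i, max (w x / w y) (w y / w x) ≤ Cm)
    (z : X) :
    ∃ C : ℝ≥0∞, C < ∞ ∧ ∀ F : X → ℂ, Measurable F →
      (∫⁻ x, (‖F x‖₊ : ℝ≥0∞) ^ p * ENNReal.ofReal (w x) ^ p ∂μ) < ∞ →
      ∀ x : X,
        ∑' i, (∫⁻ y in U i, (‖F y‖₊ : ℝ≥0∞) ∂μ) * (μ (U i))⁻¹
            * (U i).indicator (fun _ => (1 : ℝ≥0∞)) x
          ≤ C * ENNReal.ofReal (max (w x / w z) (w z / w x))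
            * (∫⁻ y, (‖F y‖₊ : ℝ≥0∞) ^ p * ENNReal.ofReal (w y) ^ p ∂μ) ^ (1/p) :=
  stmt_11_general μ U hUfin N hN w hw hwm p hp D hD hUD Cm hCm z
end

section
/- Let 1 ≤ p < ∞ and let m : X × X → [1,∞) be measurable with m(x,y) ≥ max(w(x)/w(y), w(y)/w(x)) for all x, y. Suppose there is a constant A such that for all x ∈ X: ∫_X (osc(x,y) + |R(x,y)|) m(x,y) dμ(y) ≤ A, and for all y ∈ X: ∫_X (osc(x,y) + |R(x,y)|) m(x,y) dμ(x) ≤ A. Let ν be a complex Radon measure on X with total variation |ν|, and suppose |ν|(U_i) < ∞ for all i. Then the function x ↦ ∫_X |R(x,y)| d|ν|(y) satisfies ‖ ∫_X |R(·,y)| d|ν|(y) ‖_{L^p_w} ≤ A · ‖ Σ_{i∈I} |ν|(U_i) μ(U_i)^{-1} χ_{U_i} ‖_{L^p_w} (both sides possibly infinite). (Lemma 5.5(b) specialized to Y = L^p_w.) -/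
open MeasureTheory
open scoped ENNReal NNReal

/-!
If `y` and `z` lie in a common `U i`, then `|R(x,y)| ≤ osc(x,z) + |R(x,z)|` because `|Γ| = 1`.
Averaging `|R(x,·)|` over `U i` against `ν` and spreading the average uniformly over `U i`
against `μ` therefore gives `∫ |R(x,y)| dν(y) ≤ ∫ κ(x,z) G(z) dμ(z)`. Here
`G = ∑ᵢ ν(U i) μ(U i)⁻¹ χ_{U i}`, and `κ ≤ osc + |R|` is the supremum of these averages,
a measurable kernel (unlike `osc`).
The weight condition `w(x) ≤ m(x,z) w(z)` moves the weight across, and Schur's test for the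
kernel `κ m` does the rest: its row and column integrals are at most `A` by the two
hypotheses. Schur's test itself is Hölder's inequality against the measure `κ(x,·) m(x,·) dμ`
followed by Tonelli.
-/

/-- The oscillation kernel `osc_{𝒰,Γ}(x,y) = sup_{z ∈ Q_y} |R(x,y) − Γ(y,z) R(x,z)|`,
where `Q_y = ⋃_{i : y ∈ U_i} U_i`. -/
noncomputable def osc {X I : Type*} (U : I → Set X) (R Γ : X → X → ℂ) (x y : X) : ℝ≥0∞ :=
  ⨆ z ∈ ⋃ i ∈ {i : I | y ∈ U i}, U i, (‖R x y - Γ y z * R x z‖₊ : ℝ≥0∞)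

section Schur

variable {α β : Type*} [MeasurableSpace α] [MeasurableSpace β]

theorem rpow_lintegral_mul_le {μ : Measure α} {f g : α → ℝ≥0∞} (hf : AEMeasurable f μ)
    (hg : AEMeasurable g μ) {p : ℝ} (hp : 1 ≤ p) :
    (∫⁻ a, f a * g a ∂μ) ^ p ≤ (∫⁻ a, f a ∂μ) ^ (p - 1) * ∫⁻ a, f a * g a ^ p ∂μ := by
  have hp0 : 0 < p := zero_lt_one.trans_le hp
  have hq : 0 ≤ 1 - 1 / p := sub_nonneg.2 ((div_le_one hp0).2 hp)
  have hfg : ∀ a, f a ^ (1 - 1 / p) * (f a * g a ^ p) ^ (1 / p) = f a * g a := fun a => by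
    rw [ENNReal.mul_rpow_of_nonneg _ _ (by positivity), ← ENNReal.rpow_mul,
      mul_one_div_cancel hp0.ne', ENNReal.rpow_one, ← mul_assoc, ← ENNReal.rpow_add_of_nonneg _ _ hq (by positivity),
      sub_add_cancel, ENNReal.rpow_one]
  have holder : ∫⁻ a, f a * g a ∂μ
      ≤ (∫⁻ a, f a ∂μ) ^ (1 - 1 / p) * (∫⁻ a, f a * g a ^ p ∂μ) ^ (1 / p) := by
    simpa only [hfg] using ENNReal.lintegral_mul_norm_pow_le (g := fun a => f a * g a ^ p) hf
      (hf.mul (hg.pow_const p)) hq (by positivity) (sub_add_cancel 1 (1 / p))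
  calc (∫⁻ a, f a * g a ∂μ) ^ p
      ≤ ((∫⁻ a, f a ∂μ) ^ (1 - 1 / p) * (∫⁻ a, f a * g a ^ p ∂μ) ^ (1 / p)) ^ p := by
        gcongr
    _ = (∫⁻ a, f a ∂μ) ^ (p - 1) * ∫⁻ a, f a * g a ^ p ∂μ := by
        rw [ENNReal.mul_rpow_of_nonneg _ _ hp0.le, ← ENNReal.rpow_mul, ← ENNReal.rpow_mul,
          one_div_mul_cancel hp0.ne', ENNReal.rpow_one, sub_mul, one_mul,
          one_div_mul_cancel hp0.ne']

variable {μ : Measure α} {ν : Measure β} [SFinite μ] [SFinite ν] {k : α → β → ℝ≥0∞}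
  {H : β → ℝ≥0∞} {p : ℝ} {A : ℝ≥0∞}

theorem lintegral_rpow_lintegral_mul_le (hk : Measurable (Function.uncurry k)) (hH : Measurable H)
    (hp : 1 ≤ p) (hrow : ∀ x, ∫⁻ z, k x z ∂ν ≤ A) (hcol : ∀ z, ∫⁻ x, k x z ∂μ ≤ A) :
    ∫⁻ x, (∫⁻ z, k x z * H z ∂ν) ^ p ∂μ ≤ A ^ p * ∫⁻ z, H z ^ p ∂ν := by
  have hp1 : 0 ≤ p - 1 := sub_nonneg.2 hp
  have hkH : Measurable (Function.uncurry fun x z => k x z * H z ^ p) :=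
    hk.mul ((hH.pow_const p).comp measurable_snd)
  calc ∫⁻ x, (∫⁻ z, k x z * H z ∂ν) ^ p ∂μ
      ≤ ∫⁻ x, A ^ (p - 1) * ∫⁻ z, k x z * H z ^ p ∂ν ∂μ := by
        refine lintegral_mono fun x => (rpow_lintegral_mul_le hk.of_uncurry_left.aemeasurable
          hH.aemeasurable hp).trans ?_
        gcongr
        exact hrow x
    _ = A ^ (p - 1) * ∫⁻ z, (∫⁻ x, k x z ∂μ) * H z ^ p ∂ν := by
        rw [lintegral_const_mul _ hkH.lintegral_prod_right,
          lintegral_lintegral_swap hkH.aemeasurable]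
        congr 1
        exact lintegral_congr fun z => lintegral_mul_const _ hk.of_uncurry_right
    _ ≤ A ^ (p - 1) * ∫⁻ z, A * H z ^ p ∂ν := by
        gcongr with z
        exact hcol z
    _ = A ^ p * ∫⁻ z, H z ^ p ∂ν := by
        have hA : A ^ p = A ^ (p - 1) * A ^ (1 : ℝ) := by
          rw [← ENNReal.rpow_add_of_nonneg _ _ hp1 zero_le_one, sub_add_cancel]
        rw [lintegral_const_mul _ (hH.pow_const p), hA, ENNReal.rpow_one, mul_assoc]

theorem lintegral_rpow_lintegral_mul_rpow_one_div_le (hk : Measurable (Function.uncurry k))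
    (hH : Measurable H) (hp : 1 ≤ p) (hrow : ∀ x, ∫⁻ z, k x z ∂ν ≤ A)
    (hcol : ∀ z, ∫⁻ x, k x z ∂μ ≤ A) :
    (∫⁻ x, (∫⁻ z, k x z * H z ∂ν) ^ p ∂μ) ^ (1 / p) ≤ A * (∫⁻ z, H z ^ p ∂ν) ^ (1 / p) := by
  have hp0 : 0 < p := zero_lt_one.trans_le hp
  calc (∫⁻ x, (∫⁻ z, k x z * H z ∂ν) ^ p ∂μ) ^ (1 / p)
      ≤ (A ^ p * ∫⁻ z, H z ^ p ∂ν) ^ (1 / p) := by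
        gcongr
        exact lintegral_rpow_lintegral_mul_le hk hH hp hrow hcol
    _ = A * (∫⁻ z, H z ^ p ∂ν) ^ (1 / p) := by
        rw [ENNReal.mul_rpow_of_nonneg _ _ (by positivity), one_div, ENNReal.rpow_rpow_inv hp0.ne']

end Schur

section Cover

variable {ι X Y : Type*} [MeasurableSpace X] [MeasurableSpace Y] (U : ι → Set Y) (ν : Measure Y)

noncomputable def coverSupAverage (g : Y → ℝ≥0∞) (z : Y) : ℝ≥0∞ :=
  ⨆ i, (U i).indicator (fun _ => ⨍⁻ y in U i, g y ∂ν) z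

variable {U ν}

theorem le_coverSupAverage {g : Y → ℝ≥0∞} {i : ι} {z : Y} (hz : z ∈ U i) :
    ⨍⁻ y in U i, g y ∂ν ≤ coverSupAverage U ν g z :=
  le_of_eq_of_le (Set.indicator_of_mem hz fun _ => ⨍⁻ y in U i, g y ∂ν).symm
    (le_iSup (fun j => (U j).indicator (fun _ => ⨍⁻ y in U j, g y ∂ν) z) i)

theorem coverSupAverage_le (hU : ∀ i, MeasurableSet (U i)) {g : Y → ℝ≥0∞} {z : Y} {c : ℝ≥0∞}
    (h : ∀ i, z ∈ U i → ∀ y ∈ U i, g y ≤ c) : coverSupAverage U ν g z ≤ c := by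
  refine iSup_le fun i => ?_
  by_cases hz : z ∈ U i
  · rw [Set.indicator_of_mem hz]
    exact (laverage_le_essSup g).trans
      (essSup_le_of_ae_le c (ae_restrict_of_forall_mem (hU i) (h i hz)))
  · simp only [Set.indicator_of_notMem hz, zero_le]

variable [Countable ι]

theorem measurable_coverSupAverage (hU : ∀ i, MeasurableSet (U i)) (g : Y → ℝ≥0∞) :
    Measurable (coverSupAverage U ν g) :=
  .iSup fun i => measurable_const.indicator (hU i)

theorem measurable_uncurry_coverSupAverage (hU : ∀ i, MeasurableSet (U i))
    (hν : ∀ i, ν (U i) ≠ ∞) {f : X → Y → ℝ≥0∞} (hf : Measurable (Function.uncurry f)) :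
    Measurable (Function.uncurry fun x => coverSupAverage U ν (f x)) := by
  refine .iSup fun i => ?_
  have : IsFiniteMeasure (ν.restrict (U i)) := isFiniteMeasure_restrict.2 (hν i)
  have hav : Measurable fun x => ⨍⁻ y in U i, f x y ∂ν := by
    simp only [setLAverage_eq]
    exact hf.lintegral_prod_right.div_const _
  exact (hav.comp measurable_fst).ite (measurable_snd (hU i)) measurable_const

theorem lintegral_le_lintegral_coverSupAverage_mul (μ : Measure Y) (hU : ∀ i, MeasurableSet (U i))
    (hcov : ∀ y, ∃ i, y ∈ U i) (hμ₀ : ∀ i, μ (U i) ≠ 0) (hμ : ∀ i, μ (U i) ≠ ∞)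
    (hν : ∀ i, ν (U i) ≠ ∞) (g : Y → ℝ≥0∞) :
    ∫⁻ y, g y ∂ν ≤ ∫⁻ z, coverSupAverage U ν g z *
      ∑' i, ν (U i) * (μ (U i))⁻¹ * (U i).indicator (fun _ => (1 : ℝ≥0∞)) z ∂μ := by
  have hunion : (⋃ i, U i) = Set.univ := Set.eq_univ_of_forall fun y => Set.mem_iUnion.2 (hcov y)
  have hκ := measurable_coverSupAverage (ν := ν) hU g
  have hpiece : ∀ i, ∫⁻ y in U i, g y ∂ν ≤ ∫⁻ z,
      ν (U i) * (μ (U i))⁻¹ * (U i).indicator (fun _ => (1 : ℝ≥0∞)) z *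
        coverSupAverage U ν g z ∂μ := by
    intro i
    calc ∫⁻ y in U i, g y ∂ν = ν (U i) * ⨍⁻ _ in U i, (⨍⁻ y in U i, g y ∂ν) ∂μ := by
          rw [setLAverage_const (hμ₀ i) (hμ i), measure_mul_setLAverage _ (hν i)]
      _ ≤ ν (U i) * ⨍⁻ z in U i, coverSupAverage U ν g z ∂μ := by
          refine mul_le_mul' le_rfl (laverage_mono_ae ?_)
          exact ae_restrict_of_forall_mem (hU i) fun z hz => le_coverSupAverage hz
      _ = _ := by
          rw [setLAverage_eq, ← lintegral_indicator (hU i), ENNReal.div_eq_inv_mul, ← mul_assoc,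
            ← lintegral_const_mul _ (hκ.indicator (hU i))]
          congr 1 with z
          by_cases hz : z ∈ U i <;> simp [hz]
  calc ∫⁻ y, g y ∂ν = ∫⁻ y in ⋃ i, U i, g y ∂ν := by rw [hunion, Measure.restrict_univ]
    _ ≤ ∑' i, ∫⁻ y in U i, g y ∂ν := lintegral_iUnion_le U g
    _ ≤ ∑' i, ∫⁻ z, ν (U i) * (μ (U i))⁻¹ * (U i).indicator (fun _ => (1 : ℝ≥0∞)) z *
          coverSupAverage U ν g z ∂μ := ENNReal.tsum_le_tsum hpiece
    _ = _ := by
        rw [← lintegral_tsum (f := fun i z => ν (U i) * (μ (U i))⁻¹ *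
          (U i).indicator (fun _ => (1 : ℝ≥0∞)) z * coverSupAverage U ν g z)
          fun i => (((measurable_const.indicator (hU i)).const_mul _).mul hκ).aemeasurable]
        exact lintegral_congr fun z => by rw [ENNReal.tsum_mul_right, mul_comm]

end Cover

theorem nnnorm_le_osc_add_nnnorm {X I : Type*} {U : I → Set X} {R Γ : X → X → ℂ} {x y z : X}
    {i : I} (hΓ : ‖Γ z y‖ = 1) (hz : z ∈ U i) (hy : y ∈ U i) :
    (‖R x y‖₊ : ℝ≥0∞) ≤ osc U R Γ x z + ‖R x z‖₊ := by
  have hosc : (‖R x z - Γ z y * R x y‖₊ : ℝ≥0∞) ≤ osc U R Γ x z :=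
    le_iSup₂ (f := fun y' (_ : y' ∈ ⋃ j ∈ {j : I | z ∈ U j}, U j) =>
      (‖R x z - Γ z y' * R x y'‖₊ : ℝ≥0∞)) y (Set.mem_biUnion (x := i) hz hy)
  calc (‖R x y‖₊ : ℝ≥0∞) = ‖R x z - (R x z - Γ z y * R x y)‖₊ := by
        rw [sub_sub_cancel, nnnorm_mul, show ‖Γ z y‖₊ = 1 from NNReal.eq hΓ, one_mul]
    _ ≤ ‖R x z - Γ z y * R x y‖₊ + ‖R x z‖₊ := by
        rw [add_comm]; exact_mod_cast nnnorm_sub_le _ _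
    _ ≤ osc U R Γ x z + ‖R x z‖₊ := by gcongr

/-- `ν` plays the role of the total variation `|ν|` of the paper's complex Radon measure. -/
theorem stmt_12_general
    {X : Type*} [MeasurableSpace X] (μ : Measure X)
    {I : Type*} [Countable I] (U : I → Set X)
    (hUmeas : ∀ i, MeasurableSet (U i))
    (hUpos : ∀ i, 0 < μ (U i)) (hUfin : ∀ i, μ (U i) < ∞)
    (hcov : ∀ x : X, ∃ i, x ∈ U i)
    (w : X → ℝ) (hw : ∀ x, 0 < w x) (hwm : Measurable w)
    (p : ℝ) (hp : 1 ≤ p)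
    (m : X → X → ℝ) (hmmeas : Measurable (Function.uncurry m))
    (hmw : ∀ x y, max (w x / w y) (w y / w x) ≤ m x y)
    (R Γ : X → X → ℂ) (hRmeas : Measurable (Function.uncurry R))
    (hΓ : ∀ x y, ‖Γ x y‖ = 1)
    (A : ℝ≥0∞)
    (hA1 : ∀ x, ∫⁻ y, (osc U R Γ x y + (‖R x y‖₊ : ℝ≥0∞)) * ENNReal.ofReal (m x y) ∂μ ≤ A)
    (hA2 : ∀ y, ∫⁻ x, (osc U R Γ x y + (‖R x y‖₊ : ℝ≥0∞)) * ENNReal.ofReal (m x y) ∂μ ≤ A)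
    (ν : Measure X) (hν : ∀ i, ν (U i) < ∞) :
    (∫⁻ x, (∫⁻ y, (‖R x y‖₊ : ℝ≥0∞) ∂ν) ^ p * ENNReal.ofReal (w x) ^ p ∂μ) ^ (1/p)
      ≤ A * (∫⁻ x, (∑' i, ν (U i) * (μ (U i))⁻¹
            * (U i).indicator (fun _ => (1 : ℝ≥0∞)) x) ^ p
          * ENNReal.ofReal (w x) ^ p ∂μ) ^ (1/p) := by
  have : SigmaFinite μ := Measure.sigmaFinite_of_countable (Set.countable_range U)
    (by rintro _ ⟨i, rfl⟩; exact hUfin i)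
    (Set.eq_univ_of_forall fun x => (hcov x).elim fun i hi => ⟨U i, ⟨i, rfl⟩, hi⟩)
  have hp0 : 0 ≤ p := zero_le_one.trans hp
  set W : X → ℝ≥0∞ := fun x => ENNReal.ofReal (w x)
  set G : X → ℝ≥0∞ := fun z =>
    ∑' i, ν (U i) * (μ (U i))⁻¹ * (U i).indicator (fun _ => (1 : ℝ≥0∞)) z
  set κ : X → X → ℝ≥0∞ := fun x => coverSupAverage U ν fun y => (‖R x y‖₊ : ℝ≥0∞)
  set k : X → X → ℝ≥0∞ := fun x z => κ x z * ENNReal.ofReal (m x z)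
  have hκ : ∀ x z, κ x z ≤ osc U R Γ x z + ‖R x z‖₊ := fun x z =>
    coverSupAverage_le hUmeas fun i hz _ hy => nnnorm_le_osc_add_nnnorm (hΓ z _) hz hy
  have hk : Measurable (Function.uncurry k) :=
    (measurable_uncurry_coverSupAverage (f := fun x y => (‖R x y‖₊ : ℝ≥0∞)) hUmeas
      (fun i => (hν i).ne) hRmeas.nnnorm.coe_nnreal_ennreal).mul
      (ENNReal.measurable_ofReal.comp hmmeas)
  have hW : ∀ x z, W x ≤ ENNReal.ofReal (m x z) * W z := fun x z => by
    rw [← ENNReal.ofReal_mul' (hw z).le]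
    exact ENNReal.ofReal_le_ofReal ((div_le_iff₀ (hw z)).1 ((le_max_left _ _).trans (hmw x z)))
  have hpoint : ∀ x, (∫⁻ y, (‖R x y‖₊ : ℝ≥0∞) ∂ν) * W x ≤ ∫⁻ z, k x z * (G z * W z) ∂μ := by
    intro x
    calc (∫⁻ y, (‖R x y‖₊ : ℝ≥0∞) ∂ν) * W x
        ≤ (∫⁻ z, κ x z * G z ∂μ) * W x := by
          refine mul_le_mul' ?_ le_rfl
          exact lintegral_le_lintegral_coverSupAverage_mul μ hUmeas hcov (fun i => (hUpos i).ne')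
            (fun i => (hUfin i).ne) (fun i => (hν i).ne) _
      _ = ∫⁻ z, κ x z * G z * W x ∂μ := (lintegral_mul_const' _ _ ENNReal.ofReal_ne_top).symm
      _ ≤ ∫⁻ z, k x z * (G z * W z) ∂μ := lintegral_mono fun z => by
          calc κ x z * G z * W x ≤ κ x z * G z * (ENNReal.ofReal (m x z) * W z) := by
                gcongr; exact hW x z
            _ = k x z * (G z * W z) := by ring
  have hrow : ∀ x, ∫⁻ z, k x z ∂μ ≤ A := fun x =>
    (lintegral_mono fun z => mul_le_mul' (hκ x z) le_rfl).trans (hA1 x)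
  have hcol : ∀ z, ∫⁻ x, k x z ∂μ ≤ A := fun z =>
    (lintegral_mono fun x => mul_le_mul' (hκ x z) le_rfl).trans (hA2 z)
  calc (∫⁻ x, (∫⁻ y, (‖R x y‖₊ : ℝ≥0∞) ∂ν) ^ p * W x ^ p ∂μ) ^ (1 / p)
      = (∫⁻ x, ((∫⁻ y, (‖R x y‖₊ : ℝ≥0∞) ∂ν) * W x) ^ p ∂μ) ^ (1 / p) := by
        simp only [ENNReal.mul_rpow_of_nonneg _ _ hp0]
    _ ≤ (∫⁻ x, (∫⁻ z, k x z * (G z * W z) ∂μ) ^ p ∂μ) ^ (1 / p) := by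
        gcongr with x
        exact hpoint x
    _ ≤ A * (∫⁻ z, (G z * W z) ^ p ∂μ) ^ (1 / p) :=
        lintegral_rpow_lintegral_mul_rpow_one_div_le hk
          ((Measurable.tsum fun i => (measurable_const.indicator (hUmeas i)).const_mul _).mul
            (ENNReal.measurable_ofReal.comp hwm)) hp hrow hcol
    _ = _ := by simp only [G, W, ENNReal.mul_rpow_of_nonneg _ _ hp0]

/-- **Lemma 5.5(b) specialized to `Y = L^p_w`.** If both `A_m`-half-norms of
`osc + |R|` are bounded by `A`, then for the total variation measure `|ν|` of a
complex Radon measure `ν` (modelled here, more generally, by an arbitrary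
positive measure `ν` which is finite on each `U_i`) one has
`‖∫_X |R(·,y)| d|ν|(y)‖_{L^p_w} ≤ A ‖Σ_i |ν|(U_i) μ(U_i)⁻¹ χ_{U_i}‖_{L^p_w}`. -/
theorem stmt_12
    {X : Type*} [MeasurableSpace X] (μ : Measure X)
    {I : Type*} [Countable I] (U : I → Set X)
    (hUmeas : ∀ i, MeasurableSet (U i))
    (hUpos : ∀ i, 0 < μ (U i)) (hUfin : ∀ i, μ (U i) < ∞)
    (hcov : ∀ x : X, ∃ i, x ∈ U i)
    (N : ℕ) (hN : ∀ x : X, {i : I | x ∈ U i}.encard ≤ N)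
    (w : X → ℝ) (hw : ∀ x, 0 < w x) (hwm : Measurable w)
    (p : ℝ) (hp : 1 ≤ p)
    (m : X → X → ℝ) (hm1 : ∀ x y, 1 ≤ m x y) (hmmeas : Measurable (Function.uncurry m))
    (hmw : ∀ x y, max (w x / w y) (w y / w x) ≤ m x y)
    (R Γ : X → X → ℂ) (hRmeas : Measurable (Function.uncurry R))
    (hΓ : ∀ x y, ‖Γ x y‖ = 1)
    (A : ℝ≥0∞)
    (hA1 : ∀ x, ∫⁻ y, (osc U R Γ x y + (‖R x y‖₊ : ℝ≥0∞)) * ENNReal.ofReal (m x y) ∂μ ≤ A)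
    (hA2 : ∀ y, ∫⁻ x, (osc U R Γ x y + (‖R x y‖₊ : ℝ≥0∞)) * ENNReal.ofReal (m x y) ∂μ ≤ A)
    (ν : Measure X) (hν : ∀ i, ν (U i) < ∞) :
    (∫⁻ x, (∫⁻ y, (‖R x y‖₊ : ℝ≥0∞) ∂ν) ^ p * ENNReal.ofReal (w x) ^ p ∂μ) ^ (1/p)
      ≤ A * (∫⁻ x, (∑' i, ν (U i) * (μ (U i))⁻¹
            * (U i).indicator (fun _ => (1 : ℝ≥0∞)) x) ^ p
          * ENNReal.ofReal (w x) ^ p ∂μ) ^ (1/p) :=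
  stmt_12_general μ U hUmeas hUpos hUfin hcov w hw hwm p hp m hmmeas hmw R Γ hRmeas hΓ A hA1 hA2 ν
    hν
end

section
/- Suppose sup_{x,y∈U_i} m(x,y) ≤ C_m for all i, that R satisfies R(x,y) = conj(R(y,x)) for all x,y, and choose points x_i ∈ U_i. Suppose ∫_X |R(x,y)| m(x,y) dμ(y) ≤ A₁ for all x, ∫_X |R(x,y)| m(x,y) dμ(x) ≤ A₁ for all y, and ∫_X osc(y,x) m(x,y) dμ(x) ≤ A₂ for all y. Define K(x,y) = Σ_{i∈I} |R(x_i, y)| χ_{U_i}(x). Then: (1) for all x ∈ X, ∫_X K(x,y) m(x,y) dμ(y) ≤ N C_m A₁; and (2) for all y ∈ X, ∫_X K(x,y) m(x,y) dμ(x) ≤ N (A₂ + A₁). (Kernel estimates from the proof of Lemma 5.11.) -/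
/-!
For `x ∈ U_i`, submultiplicativity of `m` gives `m(x,y) ≤ C_m m(x_i,y)`; and since `x_i ∈ Q_x`,
Hermitian symmetry and `|Γ| = 1` give
`|R(x_i,y)| = |Γ(x,x_i) R(y,x_i)| ≤ osc(y,x) + |R(y,x)| = osc(y,x) + |R(x,y)|`.
Every `x` lies in at most `N` of the sets `U_i`, so summing either pointwise bound over `i`
costs a factor `N`, and integrating against the hypotheses `A₁`, `A₂` gives both estimates.
-/

open MeasureTheory
open scoped ENNReal NNReal

section

variable {X I : Type*}

theorem tsum_mul_indicator_one_le {U : I → Set X} {x : X} {N : ℕ}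
    (hN : {i | x ∈ U i}.encard ≤ N) {c : I → ℝ≥0∞} {B : ℝ≥0∞} (hc : ∀ i, x ∈ U i → c i ≤ B) :
    ∑' i, c i * (U i).indicator (fun _ => (1 : ℝ≥0∞)) x ≤ N * B := by
  have hind : ∀ i, c i * (U i).indicator (fun _ => (1 : ℝ≥0∞)) x = {i | x ∈ U i}.indicator c i := by
    intro i
    by_cases hi : x ∈ U i <;> simp [hi]
  calc ∑' i, c i * (U i).indicator (fun _ => (1 : ℝ≥0∞)) x
      = ∑' i : {i | x ∈ U i}, c i := by simp_rw [hind, tsum_subtype]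
    _ ≤ ∑' _ : {i | x ∈ U i}, B := ENNReal.tsum_le_tsum fun i => hc i i.2
    _ = {i | x ∈ U i}.encard * B := ENNReal.tsum_set_const _ B
    _ ≤ N * B := by gcongr; exact_mod_cast hN

theorem nnnorm_le_osc_add {U : I → Set X} {R Γ : X → X → ℂ}
    (hR : ∀ a b, ‖R a b‖ = ‖R b a‖) (hΓ : ∀ a b, ‖Γ a b‖ = 1) {x z : X}
    (hz : z ∈ ⋃ i ∈ {i | x ∈ U i}, U i) (y : X) :
    (‖R z y‖₊ : ℝ≥0∞) ≤ osc U R Γ y x + ‖R x y‖₊ := by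
  have hosc : (‖R y x - Γ x z * R y z‖₊ : ℝ≥0∞) ≤ osc U R Γ y x :=
    le_iSup₂ (f := fun z (_ : z ∈ ⋃ i ∈ {i | x ∈ U i}, U i) =>
      (‖R y x - Γ x z * R y z‖₊ : ℝ≥0∞)) z hz
  have hnorm : ‖R z y‖₊ ≤ ‖R y x - Γ x z * R y z‖₊ + ‖R x y‖₊ := by
    rw [← NNReal.coe_le_coe]
    push_cast
    calc ‖R z y‖ = ‖Γ x z * R y z‖ := by rw [norm_mul, hΓ, one_mul, hR]
      _ = ‖R y x - (R y x - Γ x z * R y z)‖ := by rw [sub_sub_cancel]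
      _ ≤ ‖R y x - Γ x z * R y z‖ + ‖R x y‖ := by
        rw [add_comm, hR x y]; exact norm_sub_le _ _
  calc (‖R z y‖₊ : ℝ≥0∞) ≤ ‖R y x - Γ x z * R y z‖₊ + ‖R x y‖₊ := by exact_mod_cast hnorm
    _ ≤ osc U R Γ y x + ‖R x y‖₊ := by gcongr

theorem ofReal_le_ofReal_mul_of_submul {m : X → X → ℝ} (hm0 : ∀ a b, 0 ≤ m a b)
    (hmsub : ∀ a b c, m a b ≤ m a c * m c b) {C : ℝ} {x z : X} (hxz : m x z ≤ C) (y : X) :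
    ENNReal.ofReal (m x y) ≤ ENNReal.ofReal C * ENNReal.ofReal (m z y) := by
  rw [← ENNReal.ofReal_mul ((hm0 x z).trans hxz)]
  exact ENNReal.ofReal_le_ofReal
    ((hmsub x y z).trans (mul_le_mul_of_nonneg_right hxz (hm0 z y)))

variable {U : I → Set X} {N : ℕ} {R : X → X → ℂ} {xi : I → X}

noncomputable def coverKernel (U : I → Set X) (R : X → X → ℂ) (xi : I → X) (x y : X) : ℝ≥0∞ :=
  ∑' i, (‖R (xi i) y‖₊ : ℝ≥0∞) * (U i).indicator (fun _ => 1) x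

theorem coverKernel_le_osc_add {Γ : X → X → ℂ} (hN : ∀ x, {i | x ∈ U i}.encard ≤ N)
    (hR : ∀ a b, ‖R a b‖ = ‖R b a‖) (hΓ : ∀ a b, ‖Γ a b‖ = 1) (hxi : ∀ i, xi i ∈ U i)
    (x y : X) :
    coverKernel U R xi x y ≤ N * (osc U R Γ y x + ‖R x y‖₊) :=
  tsum_mul_indicator_one_le (hN x) fun i hx =>
    nnnorm_le_osc_add hR hΓ (Set.mem_biUnion (x := i) hx (hxi i)) y

variable [MeasurableSpace X] {μ : Measure X} {m : X → X → ℝ}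

theorem lintegral_coverKernel_mul_le_left [Countable I]
    (hN : ∀ x, {i | x ∈ U i}.encard ≤ N) (hRmeas : Measurable (Function.uncurry R))
    (hmmeas : Measurable (Function.uncurry m)) (hm0 : ∀ a b, 0 ≤ m a b)
    (hmsub : ∀ a b c, m a b ≤ m a c * m c b)
    {C : ℝ} (hC : ∀ i, ∀ x ∈ U i, ∀ y ∈ U i, m x y ≤ C) (hxi : ∀ i, xi i ∈ U i)
    {A : ℝ≥0∞} (hA : ∀ x, ∫⁻ y, (‖R x y‖₊ : ℝ≥0∞) * ENNReal.ofReal (m x y) ∂μ ≤ A) (x : X) :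
    ∫⁻ y, coverKernel U R xi x y * ENNReal.ofReal (m x y) ∂μ ≤ N * ENNReal.ofReal C * A := by
  set F : I → X → ℝ≥0∞ := fun i y =>
    ENNReal.ofReal C * ((‖R (xi i) y‖₊ : ℝ≥0∞) * ENNReal.ofReal (m (xi i) y))
  have hF : ∀ i, Measurable (F i) := fun i =>
    measurable_const.mul ((hRmeas.comp measurable_prodMk_left).nnnorm.coe_nnreal_ennreal.mul
      (hmmeas.comp measurable_prodMk_left).ennreal_ofReal)
  have hpoint : ∀ y, coverKernel U R xi x y * ENNReal.ofReal (m x y)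
      ≤ ∑' i, F i y * (U i).indicator (fun _ => 1) x := by
    intro y
    rw [coverKernel, ← ENNReal.tsum_mul_right]
    refine ENNReal.tsum_le_tsum fun i => ?_
    by_cases hx : x ∈ U i
    · simp only [Set.indicator_of_mem hx, mul_one, F]
      rw [mul_left_comm]
      gcongr
      exact ofReal_le_ofReal_mul_of_submul hm0 hmsub (hC i x hx (xi i) (hxi i)) y
    · simp [Set.indicator_of_notMem hx]
  calc ∫⁻ y, coverKernel U R xi x y * ENNReal.ofReal (m x y) ∂μ
      ≤ ∫⁻ y, ∑' i, F i y * (U i).indicator (fun _ => 1) x ∂μ := lintegral_mono hpoint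
    _ = ∑' i, (∫⁻ y, F i y ∂μ) * (U i).indicator (fun _ => 1) x := by
      rw [lintegral_tsum fun i => ((hF i).mul_const _).aemeasurable]
      simp only [lintegral_mul_const _ (hF _)]
    _ ≤ N * (ENNReal.ofReal C * A) :=
      tsum_mul_indicator_one_le (hN x) fun i _ =>
        (lintegral_const_mul' _ _ ENNReal.ofReal_ne_top).trans_le (by gcongr; exact hA _)
    _ = N * ENNReal.ofReal C * A := (mul_assoc _ _ _).symm

theorem lintegral_coverKernel_mul_le_right {Γ : X → X → ℂ}
    (hN : ∀ x, {i | x ∈ U i}.encard ≤ N) (hRmeas : Measurable (Function.uncurry R))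
    (hmmeas : Measurable (Function.uncurry m)) (hR : ∀ a b, ‖R a b‖ = ‖R b a‖)
    (hΓ : ∀ a b, ‖Γ a b‖ = 1) (hxi : ∀ i, xi i ∈ U i) {A₁ A₂ : ℝ≥0∞}
    (hA₁ : ∀ y, ∫⁻ x, (‖R x y‖₊ : ℝ≥0∞) * ENNReal.ofReal (m x y) ∂μ ≤ A₁)
    (hA₂ : ∀ y, ∫⁻ x, osc U R Γ y x * ENNReal.ofReal (m x y) ∂μ ≤ A₂) (y : X) :
    ∫⁻ x, coverKernel U R xi x y * ENNReal.ofReal (m x y) ∂μ ≤ N * (A₂ + A₁) := by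
  have hmeas : Measurable fun x => (‖R x y‖₊ : ℝ≥0∞) * ENNReal.ofReal (m x y) :=
    (hRmeas.comp measurable_prodMk_right).nnnorm.coe_nnreal_ennreal.mul
      (hmmeas.comp measurable_prodMk_right).ennreal_ofReal
  calc ∫⁻ x, coverKernel U R xi x y * ENNReal.ofReal (m x y) ∂μ
      ≤ ∫⁻ x, N * (osc U R Γ y x * ENNReal.ofReal (m x y)
          + (‖R x y‖₊ : ℝ≥0∞) * ENNReal.ofReal (m x y)) ∂μ := by
        refine lintegral_mono fun x => ?_
        rw [← add_mul, ← mul_assoc]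
        gcongr
        exact coverKernel_le_osc_add hN hR hΓ hxi x y
    _ = N * (∫⁻ x, osc U R Γ y x * ENNReal.ofReal (m x y) ∂μ
          + ∫⁻ x, (‖R x y‖₊ : ℝ≥0∞) * ENNReal.ofReal (m x y) ∂μ) := by
      rw [lintegral_const_mul' _ _ (ENNReal.natCast_ne_top N), lintegral_add_right _ hmeas]
    _ ≤ N * (A₂ + A₁) := by gcongr <;> apply_assumption

end

theorem stmt_15_general
    {X : Type*} [MeasurableSpace X] (μ : Measure X)
    {I : Type*} [Countable I] (U : I → Set X)
    (N : ℕ) (hN : ∀ x : X, {i : I | x ∈ U i}.encard ≤ N)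
    (m : X → X → ℝ) (hm1 : ∀ x y, 1 ≤ m x y)
    (hmsub : ∀ x y z, m x y ≤ m x z * m z y) (hmmeas : Measurable (Function.uncurry m))
    (Cm : ℝ) (hCm : ∀ i, ∀ x ∈ U i, ∀ y ∈ U i, m x y ≤ Cm)
    (R Γ : X → X → ℂ) (hRmeas : Measurable (Function.uncurry R))
    (hΓ : ∀ x y, ‖Γ x y‖ = 1)
    (hRsymm : ∀ x y, R x y = (starRingEnd ℂ) (R y x))
    (xi : I → X) (hxi : ∀ i, xi i ∈ U i)
    (A₁ A₂ : ℝ≥0∞)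
    (hA1 : ∀ x, ∫⁻ y, (‖R x y‖₊ : ℝ≥0∞) * ENNReal.ofReal (m x y) ∂μ ≤ A₁)
    (hA2 : ∀ y, ∫⁻ x, (‖R x y‖₊ : ℝ≥0∞) * ENNReal.ofReal (m x y) ∂μ ≤ A₁)
    (hA3 : ∀ y, ∫⁻ x, osc U R Γ y x * ENNReal.ofReal (m x y) ∂μ ≤ A₂) :
    (∀ x : X,
      ∫⁻ y, (∑' i, (‖R (xi i) y‖₊ : ℝ≥0∞) * (U i).indicator (fun _ => (1 : ℝ≥0∞)) x)
          * ENNReal.ofReal (m x y) ∂μ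
        ≤ N * ENNReal.ofReal Cm * A₁)
    ∧
    (∀ y : X,
      ∫⁻ x, (∑' i, (‖R (xi i) y‖₊ : ℝ≥0∞) * (U i).indicator (fun _ => (1 : ℝ≥0∞)) x)
          * ENNReal.ofReal (m x y) ∂μ
        ≤ N * (A₂ + A₁)) := by
  have hR : ∀ a b, ‖R a b‖ = ‖R b a‖ := fun a b => by rw [hRsymm a b, Complex.norm_conj]
  exact ⟨lintegral_coverKernel_mul_le_left hN hRmeas hmmeas
      (fun a b => zero_le_one.trans (hm1 a b)) hmsub hCm hxi hA1,
    lintegral_coverKernel_mul_le_right hN hRmeas hmmeas hR hΓ hxi hA2 hA3⟩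

/-- **Kernel estimates from the proof of Lemma 5.11.** For the kernel
`K(x,y) = Σ_i |R(x_i,y)| χ_{U_i}(x)` one has `∫_X K(x,y) m(x,y) dμ(y) ≤ N C_m A₁`
and `∫_X K(x,y) m(x,y) dμ(x) ≤ N (A₂ + A₁)`. -/
theorem stmt_15
    {X : Type*} [MeasurableSpace X] (μ : Measure X)
    {I : Type*} [Countable I] (U : I → Set X)
    (hUmeas : ∀ i, MeasurableSet (U i))
    (hUpos : ∀ i, 0 < μ (U i)) (hUfin : ∀ i, μ (U i) < ∞)
    (hcov : ∀ x : X, ∃ i, x ∈ U i)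
    (N : ℕ) (hN : ∀ x : X, {i : I | x ∈ U i}.encard ≤ N)
    (m : X → X → ℝ) (hm1 : ∀ x y, 1 ≤ m x y) (hmsymm : ∀ x y, m x y = m y x)
    (hmsub : ∀ x y z, m x y ≤ m x z * m z y) (hmmeas : Measurable (Function.uncurry m))
    (Cm : ℝ) (hCm : ∀ i, ∀ x ∈ U i, ∀ y ∈ U i, m x y ≤ Cm)
    (R Γ : X → X → ℂ) (hRmeas : Measurable (Function.uncurry R))
    (hΓ : ∀ x y, ‖Γ x y‖ = 1)
    (hRsymm : ∀ x y, R x y = (starRingEnd ℂ) (R y x))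
    (xi : I → X) (hxi : ∀ i, xi i ∈ U i)
    (A₁ A₂ : ℝ≥0∞)
    (hA1 : ∀ x, ∫⁻ y, (‖R x y‖₊ : ℝ≥0∞) * ENNReal.ofReal (m x y) ∂μ ≤ A₁)
    (hA2 : ∀ y, ∫⁻ x, (‖R x y‖₊ : ℝ≥0∞) * ENNReal.ofReal (m x y) ∂μ ≤ A₁)
    (hA3 : ∀ y, ∫⁻ x, osc U R Γ y x * ENNReal.ofReal (m x y) ∂μ ≤ A₂) :
    (∀ x : X,
      ∫⁻ y, (∑' i, (‖R (xi i) y‖₊ : ℝ≥0∞) * (U i).indicator (fun _ => (1 : ℝ≥0∞)) x)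
          * ENNReal.ofReal (m x y) ∂μ
        ≤ N * ENNReal.ofReal Cm * A₁)
    ∧
    (∀ y : X,
      ∫⁻ x, (∑' i, (‖R (xi i) y‖₊ : ℝ≥0∞) * (U i).indicator (fun _ => (1 : ℝ≥0∞)) x)
          * ENNReal.ofReal (m x y) ∂μ
        ≤ N * (A₂ + A₁)) :=
  stmt_15_general μ U N hN m hm1 hmsub hmmeas Cm hCm R Γ hRmeas hΓ hRsymm xi hxi A₁ A₂ hA1 hA2 hA3
end
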